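/- arXiv:2101.01784 — 6 statements merged into one kernel-verified Lean document; each statement's English description precedes it below -/
import Mathlib

section
/- Let k be a field and φ : k[[x₁,...,xₙ]] → k[[t]] a nonzero local k-algebra homomorphism with image R = φ(P). Then dim_k(k[[t]]/R) < ∞ if and only if the inclusion R ↪ k[[t]] is the normalization of R (i.e., k[[t]] is the integral closure of R in its total quotient ring). -/
/-!
Let `R = φ(P)` and `f = φ(xᵢ) ≠ 0`, a power series of order `m ≥ 1`. Composing `φ` with
`Y ↦ xᵢ` gives a `k`-algebra map `ψ : k[[Y]] → k[[t]]` with `ψ(Y) = f` and image inside `R`;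
`ψ(∑ cⱼ Yʲ)` agrees with `∑_{j<N} cⱼ fʲ` modulo `fᴺ` for every `N`, so `f`-adic division shows
that `1, t, …, t^{m-1}` generate `k[[t]]` as an `R`-module.

If `k[[t]]/R` is finite-dimensional: `R` is not a field (it contains the nonunit `f`), hence is
infinite-dimensional, so for every `a` multiplication by `a` cannot embed `R` into `k[[t]]/R`,
i.e. `s a ∈ R` for some `s ≠ 0` in `R`. Thus `R` and `k[[t]]` have the same fraction field, and
`k[[t]]`, integral over `R` and integrally closed, is the integral closure of `R` there.
Conversely, if `k[[t]]` is the normalization, clearing the denominators of the finitely many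
generators gives `s ≠ 0` with `s k[[t]] ⊆ R`, so `R ⊇ t^{ord s} k[[t]]` has finite codimension.
-/

open PowerSeries

/-- `ν : R →+* S` identifies `S` with the normalization of `R`, i.e. with the
integral closure of `R` in its total quotient ring `Quot(R) = FractionRing R`. -/
def RingHom.IsNormalizationMap {R S : Type*} [CommRing R] [CommRing S] (ν : R →+* S) : Prop :=
  ∃ j : S →+* FractionRing R, Function.Injective j ∧
    j.comp ν = algebraMap R (FractionRing R) ∧
    j.range = (integralClosure R (FractionRing R)).toSubring

section

variable {k S : Type*} [Field k] [CommRing S] [Algebra k S]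

theorem Subalgebra.not_finiteDimensional_of_mem_of_not_isUnit [IsDomain S] {R : Subalgebra k S}
    {f : S} (hfR : f ∈ R) (hf : f ≠ 0) (hfu : ¬IsUnit f) : ¬FiniteDimensional k R := by
  intro
  have hunit := (IsIntegral.of_finite k (⟨f, hfR⟩ : R)).isUnit fun h ↦ hf (congrArg Subtype.val h)
  exact hfu (hunit.map R.val)

theorem Subalgebra.exists_ne_zero_mul_mem_of_finiteDimensional_quotient {R : Subalgebra k S}
    (hR : ¬FiniteDimensional k R) [FiniteDimensional k (S ⧸ Subalgebra.toSubmodule R)] (a : S) :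
    ∃ s : R, s ≠ 0 ∧ (s : S) * a ∈ R := by
  by_contra! h
  let L : R →ₗ[k] S ⧸ Subalgebra.toSubmodule R :=
    (Subalgebra.toSubmodule R).mkQ ∘ₗ LinearMap.mulRight k a ∘ₗ R.val.toLinearMap
  refine hR (Module.Finite.of_injective L ((injective_iff_map_eq_zero L).mpr fun s hs ↦ ?_))
  by_contra hs0
  exact h s hs0 ((Submodule.Quotient.mk_eq_zero _).mp hs)

end

theorem isFractionRing_of_forall_exists_mul_eq {R S K : Type*} [CommRing R] [CommRing S]
    [Field K] [Algebra R S] [Algebra S K] [Algebra R K] [IsScalarTower R S K] [IsFractionRing S K]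
    (hinj : Function.Injective (algebraMap R S))
    (h : ∀ g : S, ∃ s r : R, s ≠ 0 ∧ algebraMap R S s * g = algebraMap R S r) :
    IsFractionRing R K := by
  have hRK : Function.Injective (algebraMap R K) := by
    rw [IsScalarTower.algebraMap_eq R S K]
    exact (IsFractionRing.injective S K).comp hinj
  have : FaithfulSMul R K := (faithfulSMul_iff_algebraMap_injective R K).mpr hRK
  have hfrac : ∀ g : S, ∃ r s : R, algebraMap S K g = algebraMap R K r / algebraMap R K s := by
    intro g
    obtain ⟨s, r, hs, hsg⟩ := h g
    refine ⟨r, s, eq_div_of_mul_eq ((map_ne_zero_iff _ hRK).mpr hs) ?_⟩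
    rw [IsScalarTower.algebraMap_apply R S K, IsScalarTower.algebraMap_apply R S K, ← hsg,
      map_mul, mul_comm]
  refine IsFractionRing.of_field R K fun z ↦ ?_
  obtain ⟨a, b, -, rfl⟩ := IsFractionRing.div_surjective (A := S) z
  obtain ⟨ra, sa, ha⟩ := hfrac a
  obtain ⟨rb, sb, hb⟩ := hfrac b
  exact ⟨ra * sb, sa * rb, by rw [ha, hb, div_div_div_eq, map_mul, map_mul]⟩

theorem isNormalizationMap_of_isFractionRing {R S K : Type*} [CommRing R] [CommRing S]
    [IsIntegrallyClosed S] [Field K] [Algebra R S] [Algebra.IsIntegral R S] [Algebra S K]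
    [IsFractionRing S K] [Algebra R K] [IsScalarTower R S K] [IsFractionRing R K] :
    (algebraMap R S).IsNormalizationMap := by
  let e : K ≃ₐ[R] FractionRing R := IsLocalization.algEquiv (nonZeroDivisors R) K (FractionRing R)
  refine ⟨(e : K →+* FractionRing R).comp (algebraMap S K),
    e.injective.comp (IsFractionRing.injective S K), ?_, ?_⟩
  · ext r
    simp [← IsScalarTower.algebraMap_apply R S K]
  · ext z
    simp only [RingHom.mem_range, RingHom.comp_apply, Subalgebra.mem_toSubring,
      mem_integralClosure_iff]
    rw [← isIntegral_algEquiv e.symm, IsIntegralClosure.isIntegral_iff (A := S)]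
    simp [e.eq_symm_apply]

theorem RingHom.IsNormalizationMap.exists_mul_eq_algebraMap {R S : Type*} [CommRing R]
    [CommRing S] [Algebra R S] [Module.Finite R S] (h : (algebraMap R S).IsNormalizationMap) :
    ∃ s ∈ nonZeroDivisors R, ∀ g : S, ∃ r : R, algebraMap R S s * g = algebraMap R S r := by
  classical
  obtain ⟨j, hj, hcomp, -⟩ := h
  have hj' : ∀ r, j (algebraMap R S r) = algebraMap R (FractionRing R) r := RingHom.congr_fun hcomp
  obtain ⟨T, hT⟩ := Module.Finite.fg_top (R := R) (M := S)
  obtain ⟨⟨s, hs⟩, hsT⟩ :=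
    IsLocalization.exist_integer_multiples_of_finset (nonZeroDivisors R) (T.image j)
  let C : Submodule R S :=
    (LinearMap.range (Algebra.linearMap R S)).comap (LinearMap.mulLeft R (algebraMap R S s))
  suffices hC : ⊤ ≤ C from
    ⟨s, hs, fun g ↦ by simpa [C, eq_comm] using hC (Submodule.mem_top (x := g))⟩
  rw [← hT, Submodule.span_le]
  intro g hg
  obtain ⟨r, hr⟩ := hsT (j g) (Finset.mem_image_of_mem j hg)
  refine ⟨r, hj ?_⟩
  simp [hj', hr, Algebra.smul_def]

namespace PowerSeries

theorem eq_zero_of_forall_pow_dvd {R : Type*} [CommRing R] {f g : R⟦X⟧}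
    (hf : constantCoeff f = 0) (hg : ∀ N, f ^ N ∣ g) : g = 0 := by
  ext N
  have hX : X ^ (N + 1) ∣ g := (pow_dvd_pow_of_dvd (X_dvd_iff.mpr hf) _).trans (hg _)
  simpa using X_pow_dvd_iff.mp hX N N.lt_succ_self

theorem coe_trunc_eq_sum {R : Type*} [CommRing R] (n : ℕ) (g : R⟦X⟧) :
    (trunc n g : R⟦X⟧) = ∑ i ∈ Finset.range n, coeff i g • X ^ i := by
  simp only [← Polynomial.eval₂_C_X_eq_coe, eval₂_trunc_eq_sum_range, smul_eq_C_mul]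

theorem _root_.AlgHom.map_X_pow_dvd_map_sub_sum {R A : Type*} [CommRing R] [CommRing A]
    [Algebra R A] (ψ : R⟦X⟧ →ₐ[R] A) (g : R⟦X⟧) (N : ℕ) :
    ψ X ^ N ∣ ψ g - ∑ i ∈ Finset.range N, coeff i g • ψ X ^ i := by
  rw [congrArg ψ (eq_X_pow_mul_shift_add_trunc N g), coe_trunc_eq_sum]
  simp only [map_add, map_mul, map_pow, map_sum, map_smul, add_sub_cancel_right]
  exact dvd_mul_right _ _

variable {k : Type*} [Field k]

theorem dvd_X_pow_order {s : k⟦X⟧} (hs : s ≠ 0) : s ∣ X ^ s.order.toNat := by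
  conv_lhs => rw [← X_pow_order_mul_divXPowOrder (f := s)]
  exact (isUnit_divided_by_X_pow_order hs).mul_right_dvd.mpr dvd_rfl

theorem exists_eq_sum_smul_X_pow_add_mul {f : k⟦X⟧} (hf : f ≠ 0) (g : k⟦X⟧) :
    ∃ a : ℕ → k, ∃ h, g = ∑ p ∈ Finset.range f.order.toNat, a p • X ^ p + f * h := by
  obtain ⟨u, hu⟩ := dvd_X_pow_order hf
  refine ⟨fun p ↦ coeff p g, u * mk fun i ↦ coeff (i + f.order.toNat) g, ?_⟩
  conv_lhs => rw [eq_X_pow_mul_shift_add_trunc f.order.toNat g, hu, coe_trunc_eq_sum]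
  ring

theorem exists_eq_sum_pow_mul_add_pow_mul {f : k⟦X⟧} (hf : f ≠ 0) (g : k⟦X⟧) :
    ∃ (c : ℕ → ℕ → k) (G : ℕ → k⟦X⟧), ∀ N, g =
      ∑ j ∈ Finset.range N, f ^ j * ∑ p ∈ Finset.range f.order.toNat, c j p • X ^ p
        + f ^ N * G N := by
  choose a h hah using exists_eq_sum_smul_X_pow_add_mul hf
  let G : ℕ → k⟦X⟧ := fun N ↦ Nat.rec g (fun _ G ↦ h G) N
  refine ⟨fun j ↦ a (G j), G, fun N ↦ ?_⟩
  induction N with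
  | zero => simp [G]
  | succ N ih =>
    rw [Finset.sum_range_succ, ih, hah (G N)]
    simp only [G]
    ring

theorem exists_eq_sum_map_mul_X_pow (ψ : k⟦X⟧ →ₐ[k] k⟦X⟧) (hf : ψ X ≠ 0)
    (hc : constantCoeff (ψ X) = 0) (g : k⟦X⟧) :
    ∃ r : ℕ → k⟦X⟧, g = ∑ p ∈ Finset.range (ψ X).order.toNat, ψ (r p) * X ^ p := by
  obtain ⟨c, G, hG⟩ := exists_eq_sum_pow_mul_add_pow_mul hf g
  set m := (ψ X).order.toNat
  let r : ℕ → k⟦X⟧ := fun p ↦ mk fun j ↦ c j p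
  refine ⟨r, sub_eq_zero.mp (eq_zero_of_forall_pow_dvd hc fun N ↦ ?_)⟩
  have hdigit : ∀ p, ψ X ^ N ∣ ψ (r p) - ∑ j ∈ Finset.range N, c j p • ψ X ^ j := fun p ↦ by
    simpa only [r, coeff_mk] using ψ.map_X_pow_dvd_map_sub_sum (r p) N
  have hrw : g - ∑ p ∈ Finset.range m, ψ (r p) * X ^ p = ψ X ^ N * G N -
      ∑ p ∈ Finset.range m, (ψ (r p) - ∑ j ∈ Finset.range N, c j p • ψ X ^ j) * X ^ p := by
    rw [hG N]
    simp only [sub_mul, Finset.sum_sub_distrib, Finset.mul_sum, Finset.sum_mul, smul_mul_assoc,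
      mul_smul_comm]
    rw [Finset.sum_comm (s := Finset.range N)]
    ring
  rw [hrw]
  exact dvd_sub (dvd_mul_right _ _) (Finset.dvd_sum fun p _ ↦ dvd_mul_of_dvd_left (hdigit p) _)

theorem moduleFinite_of_algHom_range_le (ψ : k⟦X⟧ →ₐ[k] k⟦X⟧) (hf : ψ X ≠ 0)
    (hc : constantCoeff (ψ X) = 0) {R : Subalgebra k k⟦X⟧} (hR : ψ.range ≤ R) :
    Module.Finite R k⟦X⟧ := by
  classical
  refine ⟨⟨(Finset.range (ψ X).order.toNat).image (X ^ ·), eq_top_iff.mpr fun g _ ↦ ?_⟩⟩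
  obtain ⟨r, rfl⟩ := exists_eq_sum_map_mul_X_pow ψ hf hc g
  refine Submodule.sum_mem _ fun p hp ↦ ?_
  exact Submodule.smul_mem _ (⟨ψ (r p), hR ⟨r p, rfl⟩⟩ : R)
    (Submodule.subset_span (Finset.mem_image_of_mem _ hp))

theorem finiteDimensional_quotient_of_mul_mem (V : Submodule k k⟦X⟧) {s : k⟦X⟧} (hs : s ≠ 0)
    (hV : ∀ g, s * g ∈ V) : FiniteDimensional k (k⟦X⟧ ⧸ V) := by
  obtain ⟨u, hu⟩ := dvd_X_pow_order hs
  set d := s.order.toNat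
  have := (Polynomial.degreeLTEquiv k d).symm.finiteDimensional
  let L : Polynomial.degreeLT k d →ₗ[k] k⟦X⟧ ⧸ V := V.mkQ ∘ₗ
    (Polynomial.coeToPowerSeries.algHom k).toLinearMap ∘ₗ (Polynomial.degreeLT k d).subtype
  refine Module.Finite.of_surjective L fun y ↦ ?_
  obtain ⟨g, rfl⟩ := V.mkQ_surjective y
  refine ⟨⟨trunc d g, Polynomial.mem_degreeLT.mpr (degree_trunc_lt g d)⟩, ?_⟩
  refine (Submodule.Quotient.eq V).mpr ?_
  have : (trunc d g : k⟦X⟧) - g = s * (-(u * mk fun i ↦ coeff (i + d) g)) := by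
    have hg := eq_X_pow_mul_shift_add_trunc d g
    rw [hu] at hg
    linear_combination -hg
  simpa [L] using this ▸ hV _

end PowerSeries

/-- For a nonzero local `k`-algebra homomorphism
`φ : k[[x₁,...,xₙ]] → k[[t]]` with image `R = φ(P)`, one has
`dim_k k[[t]]/R < ∞` if and only if the inclusion `R ↪ k[[t]]` is the
normalization of `R`. -/
theorem finite_codim_iff_normalization {k : Type*} [Field k] {n : ℕ}
    (φ : MvPowerSeries (Fin n) k →ₐ[k] PowerSeries k)
    (hloc : ∀ F, (MvPowerSeries.constantCoeff : MvPowerSeries (Fin n) k →+* k) F = 0 →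
      (PowerSeries.constantCoeff : PowerSeries k →+* k) (φ F) = 0)
    (hne : ∃ i, φ (MvPowerSeries.X i) ≠ 0) :
    FiniteDimensional k (PowerSeries k ⧸ Subalgebra.toSubmodule φ.range) ↔
      RingHom.IsNormalizationMap (Subalgebra.val φ.range).toRingHom := by
  obtain ⟨i, hf⟩ := hne
  let ψ : k⟦X⟧ →ₐ[k] k⟦X⟧ := φ.comp (substAlgHom (HasSubst.X i))
  have hψX : ψ X ≠ 0 := by simpa [ψ, substAlgHom_X] using hf
  have hc : constantCoeff (ψ X) = 0 := by
    simpa [ψ, substAlgHom_X] using hloc _ (MvPowerSeries.constantCoeff_X i)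
  have hψR : ψ.range ≤ φ.range := AlgHom.range_comp_le_range _ _
  have := moduleFinite_of_algHom_range_le ψ hψX hc hψR
  constructor
  · intro
    have hinf : ¬FiniteDimensional k φ.range :=
      Subalgebra.not_finiteDimensional_of_mem_of_not_isUnit (hψR (ψ.mem_range_self X)) hψX
        (by rw [isUnit_iff_constantCoeff, hc]; exact not_isUnit_zero)
    have : IsFractionRing φ.range (FractionRing k⟦X⟧) :=
      isFractionRing_of_forall_exists_mul_eq Subtype.val_injective fun g ↦ by
        obtain ⟨s, hs, hsg⟩ :=
          Subalgebra.exists_ne_zero_mul_mem_of_finiteDimensional_quotient hinf g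
        exact ⟨s, ⟨_, hsg⟩, hs, rfl⟩
    exact isNormalizationMap_of_isFractionRing (K := FractionRing k⟦X⟧)
  · intro hnorm
    obtain ⟨s, hs, hsg⟩ := RingHom.IsNormalizationMap.exists_mul_eq_algebraMap hnorm
    refine finiteDimensional_quotient_of_mul_mem _ (s := s) ?_ fun g ↦ ?_
    · exact fun h ↦ nonZeroDivisors.ne_zero hs (Subtype.ext h)
    · obtain ⟨r, hr⟩ := hsg g
      exact hr ▸ r.2
end

section
/- Let k be a field, R ⊆ k[[t]] a k-subalgebra that is the image of a primitive uni-branch parameterization, and let Γ = {ord(g) : g ∈ R, g ≠ 0} ⊆ ℕ be the semigroup of values. Then dim_k(k[[t]]/R) equals the number of gaps #(ℕ \ Γ), and dim_k(k[[t]]/C) equals the conductor c(Γ), the smallest c ∈ Γ with c + ℕ ⊆ Γ. -/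
/-!
Write `Γ` for the values of `R`. Every `d ∈ Γ` is the order of an element of `R` with leading
coefficient `1`, so reducing a series modulo `R` clears its coefficients at values, and the
monomials `t^d` with `d ∉ Γ` span a complement of `R` as soon as `R ⊇ t^N k[[t]]` for some `N`.
That inclusion comes from Nakayama's lemma: finite codimension makes `Γ` cofinite, say
`[a, ∞) ⊆ Γ`, so `t^a k[[t]] ⊆ R + g t^a k[[t]]` for any `g ∈ R` of positive order, whence some
`r ∈ 1 + gR`, a unit of `k[[t]]`, maps `t^a k[[t]]` into `R`. The conductor ideal is then
`t^c k[[t]]` with `c = c(Γ)`, since `f` lies in it exactly when all of `ord f + ℕ` are values.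
-/

open PowerSeries

theorem Subalgebra.moduleFinite_of_finite_quotient {k B : Type*} [CommRing k] [CommRing B]
    [Algebra k B] (A : Subalgebra k B) [Module.Finite k (B ⧸ Subalgebra.toSubmodule A)] :
    Module.Finite A B := by
  have hA : Subalgebra.toSubmodule A = (1 : Submodule A B).restrictScalars k := by
    ext x; simp
  have : Module.Finite A (1 : Submodule A B) :=
    Module.Finite.iff_fg.mpr ⟨{1}, by simp [Submodule.one_eq_span]⟩
  have : Module.Finite k (B ⧸ (1 : Submodule A B)) := Module.Finite.equiv
    ((Submodule.quotEquivOfEq _ _ hA).trans (Submodule.Quotient.restrictScalarsEquiv k _))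
  have := Module.Finite.of_restrictScalars_finite k A (B ⧸ (1 : Submodule A B))
  exact Module.Finite.of_submodule_quotient (1 : Submodule A B)

noncomputable def semigroupConductor (Γ : Set ℕ) : ℕ := sInf {c | c ∈ Γ ∧ ∀ m, c ≤ m → m ∈ Γ}

theorem semigroupConductor_le {Γ : Set ℕ} {d : ℕ} (hd : ∀ m, d ≤ m → m ∈ Γ) :
    semigroupConductor Γ ≤ d :=
  Nat.sInf_le ⟨hd d le_rfl, hd⟩

theorem mem_of_semigroupConductor_le {Γ : Set ℕ} (hΓ : ∃ a, ∀ m, a ≤ m → m ∈ Γ) {m : ℕ}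
    (hm : semigroupConductor Γ ≤ m) : m ∈ Γ :=
  have ⟨a, ha⟩ := hΓ
  (Nat.sInf_mem (s := {c | c ∈ Γ ∧ ∀ m, c ≤ m → m ∈ Γ}) ⟨a, ha a le_rfl, ha⟩).2 m hm

namespace PowerSeries

variable {k : Type*} [Field k]

theorem X_pow_dvd_iff_le_order {R : Type*} [Semiring R] {n : ℕ} {f : R⟦X⟧} :
    X ^ n ∣ f ↔ n ≤ f.order := by
  rw [order_eq_emultiplicity_X, pow_dvd_iff_le_emultiplicity]

theorem linearIndependent_X_pow {R : Type*} [Ring R] :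
    LinearIndependent R fun n : ℕ => (X : R⟦X⟧) ^ n := by
  refine linearIndependent_iff'.mpr fun s c hs i hi => ?_
  simpa [coeff_X_pow, hi] using congrArg (coeff i) hs

theorem coeff_eq_zero_of_mem_span_X_pow {R : Type*} [Semiring R] {s : Set ℕ} {m : ℕ}
    {p : R⟦X⟧} (hp : p ∈ Submodule.span R ((X ^ ·) '' s)) (hm : m ∉ s) : coeff m p = 0 := by
  suffices Submodule.span R ((X ^ ·) '' s) ≤ LinearMap.ker (coeff (R := R) m) from this hp
  rw [Submodule.span_le]
  rintro _ ⟨d, hd, rfl⟩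
  simp [coeff_X_pow, show m ≠ d from fun h => hm (h ▸ hd)]

theorem X_pow_succ_dvd_sub_smul {R : Type*} [Ring R] {b : ℕ} {r G : R⟦X⟧}
    (hr : X ^ b ∣ r) (hG : X ^ b ∣ G) (hGb : coeff b G = 1) :
    X ^ (b + 1) ∣ r - coeff b r • G := by
  rw [X_pow_dvd_iff] at *
  intro m hm
  rcases Nat.lt_succ_iff_lt_or_eq.mp hm with hm | rfl
  · simp [hr m hm, hG m hm]
  · simp [hGb]

def valueSet (V : Submodule k k⟦X⟧) : Set ℕ := {d | ∃ g ∈ V, g ≠ 0 ∧ g.order = d}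

variable {V : Submodule k k⟦X⟧}

theorem exists_X_pow_dvd_coeff_eq_one {d : ℕ} (hd : d ∈ valueSet V) :
    ∃ G ∈ V, X ^ d ∣ G ∧ coeff d G = 1 := by
  obtain ⟨g, hgV, -, hg⟩ := hd
  refine ⟨(coeff d g)⁻¹ • g, V.smul_mem _ hgV, ?_, inv_mul_cancel₀ (order_eq_nat.mp hg).1⟩
  rw [smul_eq_C_mul]
  exact dvd_mul_of_dvd_right (X_pow_dvd_iff_le_order.mpr hg.ge) _

theorem exists_X_pow_dvd_sub_sub {a : ℕ} {f : k⟦X⟧} (hf : X ^ a ∣ f) (b : ℕ) :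
    ∃ s ∈ V, ∃ h ∈ Submodule.span k ((X ^ ·) '' ((valueSet V)ᶜ ∩ Set.Ico a b)),
      X ^ b ∣ f - s - h := by
  induction b with
  | zero => exact ⟨0, V.zero_mem, 0, Submodule.zero_mem _, by simp⟩
  | succ b ih =>
    by_cases hab : b + 1 ≤ a
    · refine ⟨0, V.zero_mem, 0, Submodule.zero_mem _, ?_⟩
      simpa using (pow_dvd_pow (X : k⟦X⟧) hab).trans hf
    obtain ⟨s, hs, h, hh, hr⟩ := ih
    have hmono : Submodule.span k (((X : k⟦X⟧) ^ ·) '' ((valueSet V)ᶜ ∩ Set.Ico a b)) ≤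
        Submodule.span k (((X : k⟦X⟧) ^ ·) '' ((valueSet V)ᶜ ∩ Set.Ico a (b + 1))) :=
      Submodule.span_mono (Set.image_mono (Set.inter_subset_inter_right _
        (Set.Ico_subset_Ico_right b.le_succ)))
    by_cases hb : b ∈ valueSet V
    · obtain ⟨G, hGV, hG, hGb⟩ := exists_X_pow_dvd_coeff_eq_one hb
      refine ⟨s + coeff b (f - s - h) • G, V.add_mem hs (V.smul_mem _ hGV), h, hmono hh, ?_⟩
      convert X_pow_succ_dvd_sub_smul hr hG hGb using 1
      abel
    · refine ⟨s, hs, h + coeff b (f - s - h) • X ^ b, Submodule.add_mem _ (hmono hh)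
        (Submodule.smul_mem _ _ (Submodule.subset_span ⟨b, ⟨hb, by omega, by omega⟩, rfl⟩)), ?_⟩
      convert X_pow_succ_dvd_sub_smul hr dvd_rfl (by simp) using 1
      abel

theorem exists_X_pow_dvd_sub_of_forall_le_mem_valueSet {a : ℕ} (ha : ∀ m, a ≤ m → m ∈ valueSet V)
    {f : k⟦X⟧} (hf : X ^ a ∣ f) (b : ℕ) : ∃ s ∈ V, X ^ b ∣ f - s := by
  obtain ⟨s, hs, h, hh, hr⟩ := exists_X_pow_dvd_sub_sub (V := V) hf b
  have : (valueSet V)ᶜ ∩ Set.Ico a b = ∅ :=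
    Set.eq_empty_of_forall_notMem fun m hm => hm.1 (ha m hm.2.1)
  rw [this, Set.image_empty, Submodule.span_empty, Submodule.mem_bot] at hh
  exact ⟨s, hs, by simpa [hh] using hr⟩

theorem disjoint_span_X_pow_compl_valueSet :
    Disjoint V (Submodule.span k ((X ^ ·) '' (valueSet V)ᶜ)) := by
  refine Submodule.disjoint_def.mpr fun p hpV hpW => by_contra fun hp => ?_
  have hmem : p.order.toNat ∈ valueSet V := ⟨p, hpV, hp, (coe_toNat_order hp).symm⟩
  exact coeff_order hp (coeff_eq_zero_of_mem_span_X_pow hpW (not_not.mpr hmem))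

theorem exists_forall_le_mem_valueSet [FiniteDimensional k (k⟦X⟧ ⧸ V)] :
    ∃ a, ∀ m, a ≤ m → m ∈ valueSet V := by
  have hind := (linearIndependent_X_pow.comp _ Subtype.val_injective).map (f := V.mkQ)
    (v := fun d : ↥(valueSet V)ᶜ => (X : k⟦X⟧) ^ (d : ℕ)) (by
      rw [Submodule.ker_mkQ, ← Set.image_eq_range]
      exact disjoint_span_X_pow_compl_valueSet.symm)
  obtain ⟨N, hN⟩ := (Set.finite_coe_iff.mp hind.finite).bddAbove
  exact ⟨N + 1, fun m hm => by_contra fun hmΓ => by have := hN hmΓ; omega⟩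

theorem exists_eq_X_pow_order_mul_unit {g : k⟦X⟧} (hg : g ≠ 0) :
    ∃ u : k⟦X⟧ˣ, g = X ^ g.order.toNat * (u : k⟦X⟧) :=
  ⟨(isUnit_iff_constantCoeff.mpr
      (constantCoeff_divXPowOrder (f := g) ▸ (coeff_order hg).isUnit)).unit,
    X_pow_order_mul_divXPowOrder.symm⟩

theorem forall_le_mem_valueSet_of_forall_X_pow_dvd_mem {c₀ : ℕ}
    (hc₀ : ∀ f : k⟦X⟧, X ^ c₀ ∣ f → f ∈ V) (m : ℕ) (hm : c₀ ≤ m) : m ∈ valueSet V :=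
  ⟨X ^ m, hc₀ _ (pow_dvd_pow X hm), pow_ne_zero _ X_ne_zero, order_X_pow m⟩

theorem mem_of_X_pow_dvd_of_forall_le_mem_valueSet {c₀ c : ℕ}
    (hc₀ : ∀ f : k⟦X⟧, X ^ c₀ ∣ f → f ∈ V) (hc : ∀ m, c ≤ m → m ∈ valueSet V) {f : k⟦X⟧}
    (hf : X ^ c ∣ f) : f ∈ V := by
  obtain ⟨s, hs, hfs⟩ := exists_X_pow_dvd_sub_of_forall_le_mem_valueSet hc hf c₀
  simpa using V.add_mem hs (hc₀ _ hfs)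

theorem isCompl_span_X_pow_compl_valueSet {c₀ : ℕ} (hc₀ : ∀ f : k⟦X⟧, X ^ c₀ ∣ f → f ∈ V) :
    IsCompl V (Submodule.span k ((X ^ ·) '' (valueSet V)ᶜ)) := by
  refine ⟨disjoint_span_X_pow_compl_valueSet, codisjoint_iff.mpr (Submodule.eq_top_iff'.mpr
    fun f => ?_)⟩
  obtain ⟨s, hs, h, hh, hr⟩ := exists_X_pow_dvd_sub_sub (V := V) (a := 0) (by simp) c₀
  refine Submodule.mem_sup.mpr ⟨s + (f - s - h), V.add_mem hs (hc₀ _ hr), h,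
    Submodule.span_mono (Set.image_mono Set.inter_subset_left) hh, by abel⟩

theorem finrank_quotient_eq_ncard_compl_valueSet {c₀ : ℕ}
    (hc₀ : ∀ f : k⟦X⟧, X ^ c₀ ∣ f → f ∈ V) :
    Module.finrank k (k⟦X⟧ ⧸ V) = (valueSet V)ᶜ.ncard := by
  have : Fintype ↥(valueSet V)ᶜ := Set.Finite.fintype <| (Set.finite_Iio c₀).subset
    fun m hm => not_le.mp fun h => hm (forall_le_mem_valueSet_of_forall_X_pow_dvd_mem hc₀ m h)
  rw [(Submodule.quotientEquivOfIsCompl _ _ (isCompl_span_X_pow_compl_valueSet hc₀)).finrank_eq,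
    Set.image_eq_range, finrank_span_eq_card (b := fun d : ↥(valueSet V)ᶜ => (X : k⟦X⟧) ^ (d : ℕ))
      (linearIndependent_X_pow.comp _ Subtype.val_injective),
    Set.ncard_eq_toFinset_card', Set.toFinset_card]

theorem valueSet_eq_Ici {c : ℕ} (hV : ∀ f, f ∈ V ↔ X ^ c ∣ f) : valueSet V = Set.Ici c := by
  ext d
  refine ⟨fun ⟨g, hgV, _, hg⟩ => ?_, fun hd => ?_⟩
  · exact_mod_cast hg ▸ X_pow_dvd_iff_le_order.mp ((hV g).mp hgV)
  · exact forall_le_mem_valueSet_of_forall_X_pow_dvd_mem (fun f => (hV f).mpr) d hd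

theorem finrank_quotient_eq_of_forall_mem_iff_X_pow_dvd {c : ℕ} (hV : ∀ f, f ∈ V ↔ X ^ c ∣ f) :
    Module.finrank k (k⟦X⟧ ⧸ V) = c := by
  rw [finrank_quotient_eq_ncard_compl_valueSet (fun f => (hV f).mpr), valueSet_eq_Ici hV,
    Set.compl_Ici, Set.ncard_Iio_nat]

theorem forall_mul_mem_iff_X_pow_semigroupConductor_dvd {c₀ : ℕ}
    (hc₀ : ∀ f : k⟦X⟧, X ^ c₀ ∣ f → f ∈ V) {f : k⟦X⟧} :
    (∀ g, f * g ∈ V) ↔ X ^ semigroupConductor (valueSet V) ∣ f := by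
  have hΓ := forall_le_mem_valueSet_of_forall_X_pow_dvd_mem hc₀
  refine ⟨fun hf => ?_, fun hf g => mem_of_X_pow_dvd_of_forall_le_mem_valueSet hc₀
    (fun m => mem_of_semigroupConductor_le ⟨c₀, hΓ⟩) (hf.mul_right g)⟩
  rcases eq_or_ne f 0 with rfl | hf0
  · exact dvd_zero _
  set d := f.order.toNat
  have hd : ∀ m, d ≤ m → m ∈ valueSet V := fun m hm =>
    ⟨f * X ^ (m - d), hf _, mul_ne_zero hf0 (pow_ne_zero _ X_ne_zero), by
      rw [order_mul, order_X_pow, ← coe_toNat_order hf0, ← Nat.cast_add, Nat.add_sub_cancel' hm]⟩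
  exact X_pow_dvd_iff_le_order.mpr
    (coe_toNat_order hf0 ▸ by exact_mod_cast semigroupConductor_le hd)

end PowerSeries

theorem Subalgebra.exists_forall_X_pow_dvd_mem {k : Type*} [Field k] (S : Subalgebra k k⟦X⟧)
    [FiniteDimensional k (k⟦X⟧ ⧸ Subalgebra.toSubmodule S)] {g : k⟦X⟧} (hgS : g ∈ S)
    (hg0 : g ≠ 0) (hgc : constantCoeff g = 0) : ∃ a, ∀ f : k⟦X⟧, X ^ a ∣ f → f ∈ S := by
  obtain ⟨a, ha⟩ := exists_forall_le_mem_valueSet (V := Subalgebra.toSubmodule S)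
  obtain ⟨u, hgu⟩ := exists_eq_X_pow_order_mul_unit hg0
  set e := g.order.toNat
  have := S.moduleFinite_of_finite_quotient
  let U : Submodule S k⟦X⟧ := (Ideal.span {(X : k⟦X⟧) ^ a}).restrictScalars S
  have hU : ∀ f, f ∈ U ↔ X ^ a ∣ f := fun f => Ideal.mem_span_singleton
  have hUS : U ≤ 1 ⊔ Ideal.span {(⟨g, hgS⟩ : S)} • U := by
    intro f hf
    obtain ⟨s, hs, q, hq⟩ :=
      exists_X_pow_dvd_sub_of_forall_le_mem_valueSet ha ((hU f).mp hf) (a + e)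
    have hfs : f = s + g * ((↑u⁻¹ : k⟦X⟧) * (X ^ a * q)) := by
      rw [hgu, mul_assoc, Units.mul_inv_cancel_left, ← mul_assoc, ← pow_add, add_comm e, ← hq]
      ring
    rw [hfs]
    exact Submodule.add_mem_sup (Submodule.mem_one.mpr ⟨⟨s, hs⟩, rfl⟩)
      (Submodule.smul_mem_smul (Ideal.mem_span_singleton_self _)
        ((hU _).mpr (dvd_mul_of_dvd_right (dvd_mul_right _ _) _)))
  -- Nakayama's lemma for the finitely generated `S`-module `U`
  obtain ⟨r, hr1, hrU⟩ :=
    Submodule.exists_sub_one_mem_and_smul_le_of_fg_of_le_sup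
      ((Submodule.fg_span_singleton _).restrictScalars) le_rfl hUS
  have hr : IsUnit (r : k⟦X⟧) := by
    obtain ⟨t, ht⟩ := Ideal.mem_span_singleton'.mp hr1
    have : constantCoeff (r : k⟦X⟧) - 1 = 0 := by
      simpa [hgc] using congrArg (fun x : S => constantCoeff (x : k⟦X⟧)) ht.symm
    exact isUnit_iff_constantCoeff.mpr (by simp [sub_eq_zero.mp this])
  refine ⟨a, fun f hf => ?_⟩
  obtain ⟨y, rfl⟩ : (r : k⟦X⟧) ∣ f := hr.dvd
  obtain ⟨x, hx⟩ := Submodule.mem_one.mp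
    (hrU (Submodule.smul_mem_pointwise_smul y r U ((hU y).mpr ((hr.dvd_mul_left).mp hf))))
  rw [Algebra.smul_def] at hx
  exact hx ▸ x.2

/-- Let `R = φ.range ⊆ k[[t]]` be the image of a primitive uni-branch
parameterization (`φ` a nonzero local homomorphism with `dim_k k[[t]]/R < ∞`), and
`Γ = {ord g : g ∈ R, g ≠ 0}` the semigroup of values. Then `dim_k k[[t]]/R` is the
number of gaps `#(ℕ \ Γ)`, and `dim_k k[[t]]/C` (with `C = Ann_R(k[[t]]/R)` the
conductor ideal) is the smallest `c ∈ Γ` with `c + ℕ ⊆ Γ`. -/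
theorem delta_eq_gaps_and_conductor_eq_semigroup_conductor {k : Type*} [Field k]
    {n : ℕ} (φ : MvPowerSeries (Fin n) k →ₐ[k] PowerSeries k)
    (hloc : ∀ F, MvPowerSeries.constantCoeff (σ := Fin n) (R := k) F = 0 →
      constantCoeff (R := k) (φ F) = 0)
    (hne : ∃ i, φ (MvPowerSeries.X i) ≠ 0)
    (hfin : FiniteDimensional k (PowerSeries k ⧸ Subalgebra.toSubmodule φ.range))
    (Γ : Set ℕ)
    (hΓ : ∀ d : ℕ, d ∈ Γ ↔ ∃ g ∈ φ.range, g ≠ 0 ∧ g.order = (d : ℕ∞))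
    (C : Submodule k (PowerSeries k))
    (hC : ∀ f : PowerSeries k, f ∈ C ↔ ∀ g : PowerSeries k, f * g ∈ φ.range) :
    Module.finrank k (PowerSeries k ⧸ Subalgebra.toSubmodule φ.range) = Γᶜ.ncard ∧
    Module.finrank k (PowerSeries k ⧸ C) =
      sInf {c : ℕ | c ∈ Γ ∧ ∀ m : ℕ, c ≤ m → m ∈ Γ} := by
  obtain rfl : Γ = valueSet (Subalgebra.toSubmodule φ.range) := Set.ext hΓ
  obtain ⟨i, hi⟩ := hne
  obtain ⟨c₀, hc₀⟩ := φ.range.exists_forall_X_pow_dvd_mem ⟨_, rfl⟩ hi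
    (hloc _ (MvPowerSeries.constantCoeff_X i))
  exact ⟨finrank_quotient_eq_ncard_compl_valueSet hc₀,
    finrank_quotient_eq_of_forall_mem_iff_X_pow_dvd fun f =>
      (hC f).trans (forall_mul_mem_iff_X_pow_semigroupConductor_dvd
        (V := Subalgebra.toSubmodule φ.range) hc₀)⟩
end

section
/- Let k be a field and φ, ψ : k[[x₁,...,xₙ]] → k[[t₁]] ⊕ ... ⊕ k[[tᵣ]] two parameterizations of reduced curve singularities. Suppose the conductor of φ is C_φ = f·R̃ with f = (t₁^{c₁},...,tᵣ^{cʳ}) and c := max{c₁,...,cᵣ}. If φ(xᵢ) ≡ ψ(xᵢ) mod m̃^{2c} for all i (m̃ the Jacobson radical of R̃), then there exists a k-algebra automorphism σ of k[[x₁,...,xₙ]] with φ ∘ σ = ψ. In particular φ and ψ are left-equivalent. -/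
/-!
Since the conductor `(t^{c_j})_j · R̃` lies in the image of `φ`, there are `A` and `Bᵢ` with
`φ(A) = (t^{c_j})_j` and `φ(Bᵢ) = (t^{2c - c_j} uᵢⱼ)_j`, where `φ(xᵢ) - ψ(xᵢ) = (t^{2c} uᵢⱼ)_j`.
Then `gᵢ := xᵢ - A Bᵢ` satisfies `φ(gᵢ) = ψ(xᵢ)` and `gᵢ ≡ xᵢ mod 𝔪²`. The substitution
`σ : xᵢ ↦ gᵢ` therefore induces the identity on every `𝔪ᴺ/𝔪ᴺ⁺¹`, so it is an automorphism because
`k[[x]]` is `𝔪`-adically complete. Finally `φ ∘ σ` and `ψ` agree on the variables, hence on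
polynomials; being local they map `𝔪ᴺ` into `(t)ᴺ`, and every power series is a polynomial modulo
`𝔪ᴺ`, so they agree modulo every `(t)ᴺ`.
-/

open PowerSeries

/-- A parameterization of a reduced curve singularity with `r` branches:
a `k`-algebra map `k[[x₁,...,xₙ]] → k[[t₁]] ⊕ ... ⊕ k[[tᵣ]]` whose components are
local (map the maximal ideal into the maximal ideal), nonzero, and have pairwise
distinct images. -/
def IsParameterization {k : Type*} [Field k] {n r : ℕ}
    (φ : MvPowerSeries (Fin n) k →ₐ[k] (Fin r → PowerSeries k)) : Prop :=
  (∀ F, (MvPowerSeries.constantCoeff : MvPowerSeries (Fin n) k →+* k) F = 0 →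
      ∀ j, constantCoeff (φ F j) = 0) ∧
  (∀ j, ∃ i, φ (MvPowerSeries.X i) j ≠ 0) ∧
  (∀ j j' : Fin r, j ≠ j' →
    ((Pi.evalAlgHom k (fun _ => PowerSeries k) j).comp φ).range ≠
      ((Pi.evalAlgHom k (fun _ => PowerSeries k) j').comp φ).range)

namespace AddMonoidHom

variable {R M : Type*} [CommRing R] [AddCommGroup M] [Module R M] {I : Ideal R} {Φ : M →+ M}

theorem map_mem_pow_smul_top_of_sub_mem
    (hΦ : ∀ N, ∀ x ∈ I ^ N • (⊤ : Submodule R M), Φ x - x ∈ I ^ (N + 1) • (⊤ : Submodule R M))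
    {N : ℕ} {x : M} (hx : x ∈ I ^ N • (⊤ : Submodule R M)) : Φ x ∈ I ^ N • (⊤ : Submodule R M) := by
  simpa using add_mem hx (Submodule.pow_smul_top_le I M N.le_succ (hΦ N x hx))

theorem injective_of_sub_mem_pow_smul_top [IsHausdorff I M]
    (hΦ : ∀ N, ∀ x ∈ I ^ N • (⊤ : Submodule R M), Φ x - x ∈ I ^ (N + 1) • (⊤ : Submodule R M)) :
    Function.Injective Φ := by
  refine (injective_iff_map_eq_zero Φ).mpr fun x hx => IsHausdorff.haus ‹_› x fun N => ?_
  rw [SModEq.sub_mem, sub_zero]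
  induction N with
  | zero => simp
  | succ N ih => simpa [hx] using neg_mem (hΦ N x ih)

theorem surjective_of_sub_mem_pow_smul_top [IsAdicComplete I M]
    (hΦ : ∀ N, ∀ x ∈ I ^ N • (⊤ : Submodule R M), Φ x - x ∈ I ^ (N + 1) • (⊤ : Submodule R M)) :
    Function.Surjective Φ := by
  intro y
  -- the iteration `x ↦ x + (y - Φ x)` gains one power of `I` in the defect `y - Φ x` per step
  let x : ℕ → M := fun k => Nat.rec 0 (fun _ xk => xk + (y - Φ xk)) k
  have hdefect : ∀ k, y - Φ (x k) ∈ I ^ k • (⊤ : Submodule R M) := by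
    intro k
    induction k with
    | zero => simp
    | succ k ih =>
      have hstep : y - Φ (x (k + 1)) = -(Φ (y - Φ (x k)) - (y - Φ (x k))) := by
        change y - Φ (x k + (y - Φ (x k))) = _
        rw [map_add]
        abel
      exact hstep ▸ neg_mem (hΦ k _ ih)
  have hcauchy : ∀ {m n}, m ≤ n → x m ≡ x n [SMOD I ^ m • (⊤ : Submodule R M)] := by
    intro m n hmn
    induction n, hmn using Nat.le_induction with
    | base => rfl
    | succ n hmn ih =>
      refine ih.trans (SModEq.sub_mem.mpr ?_)
      simpa [x] using neg_mem (Submodule.pow_smul_top_le I M hmn (hdefect n))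
  obtain ⟨L, hL⟩ := IsPrecomplete.prec inferInstance hcauchy
  refine ⟨L, ((IsHausdorff.eq_iff_smodEq (I := I)).mpr fun k => SModEq.sub_mem.mpr ?_).symm⟩
  have := add_mem (hdefect k) (map_mem_pow_smul_top_of_sub_mem hΦ (SModEq.sub_mem.mp (hL k)))
  rwa [map_sub, sub_add_sub_cancel] at this

end AddMonoidHom

namespace RingHom

variable {A : Type*} [CommRing A] (Φ : A →+* A)

theorem sub_mem_sq_of_mem_span {s : Set A} (h₁ : ∀ x, Φ x - x ∈ Ideal.span s)
    (hs : ∀ x ∈ s, Φ x - x ∈ Ideal.span s ^ 2) :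
    ∀ x ∈ Ideal.span s, Φ x - x ∈ Ideal.span s ^ 2 := by
  intro x hx
  induction hx using Submodule.span_induction with
  | mem x hx => exact hs x hx
  | zero => simp
  | add x y _ _ hx hy => simpa [add_sub_add_comm] using add_mem hx hy
  | smul a x hxs hx =>
    have hΦx : Φ x ∈ Ideal.span s := by
      simpa using add_mem hxs (Ideal.pow_le_self two_ne_zero hx)
    have : Φ (a * x) - a * x = (Φ a - a) * Φ x + a * (Φ x - x) := by rw [map_mul]; ring
    rw [smul_eq_mul, this]
    refine add_mem ?_ (Ideal.mul_mem_left _ a hx)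
    exact sq (Ideal.span s) ▸ Ideal.mul_mem_mul (h₁ a) hΦx

theorem sub_mem_pow_succ_of_sub_mem_sq {I : Ideal A} (h₁ : ∀ x, Φ x - x ∈ I)
    (h₂ : ∀ x ∈ I, Φ x - x ∈ I ^ 2) : ∀ N, ∀ x ∈ I ^ N, Φ x - x ∈ I ^ (N + 1) := by
  intro N
  induction N with
  | zero => intro x _; simpa using h₁ x
  | succ N ih =>
    intro x hx
    rw [pow_succ] at hx
    refine Submodule.mul_induction_on hx (fun a ha b hb => ?_) (fun x y hx hy => ?_)
    · have hΦb : Φ b ∈ I := by simpa using add_mem hb (Ideal.pow_le_self two_ne_zero (h₂ b hb))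
      have : Φ (a * b) - a * b = (Φ a - a) * Φ b + a * (Φ b - b) := by rw [map_mul]; ring
      rw [this]
      refine add_mem (pow_succ I (N + 1) ▸ Ideal.mul_mem_mul (ih a ha) hΦb) ?_
      exact Ideal.pow_le_pow_right (by omega) (pow_add I N 2 ▸ Ideal.mul_mem_mul ha (h₂ b hb))
    · simpa [add_sub_add_comm] using add_mem hx hy

end RingHom

namespace MvPowerSeries

variable {σ R : Type*} [CommRing R]

theorem constantCoeff_substAlgHom {τ : Type*} {g : σ → MvPowerSeries τ R} (ha : HasSubst g)
    (hg : ∀ i, constantCoeff (g i) = 0) (F : MvPowerSeries σ R) :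
    constantCoeff (substAlgHom ha F) = constantCoeff F := by
  have := constantCoeff_subst_eq_zero ha hg (f := F - algebraMap R _ (constantCoeff F))
    (by simp [algebraMap_apply])
  rw [← substAlgHom_apply ha, map_sub, AlgHom.commutes, map_sub, sub_eq_zero] at this
  simpa [algebraMap_apply] using this

variable [Finite σ]

theorem mem_pow_span_range_X_of_coeff_eq_zero {N : ℕ} {F : MvPowerSeries σ R}
    (hF : ∀ d : σ →₀ ℕ, d.degree < N → coeff d F = 0) : F ∈ Ideal.span (Set.range X) ^ N := by
  set I := MvPolynomial.idealOfVars σ R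
  set e := toAdicCompletionAlgEquiv σ R
  have htrunc : truncTotal N F = 0 := by
    ext d
    rw [coeff_truncTotal_eq_ite]
    split_ifs with hd <;> simp [hF d, *]
  have he : e F ∈ I ^ N • (⊤ : Submodule (MvPolynomial σ R) (AdicCompletion I _)) := by
    rw [AdicCompletion.pow_smul_top_eq_ker_eval (MvPolynomial.idealOfVars_fg σ R),
      LinearMap.mem_ker, AdicCompletion.eval_apply, toAdicCompletionAlgEquiv_apply,
      toAdicCompletion_apply_eq_mk_truncTotal, htrunc, map_zero]
  have hF' : F ∈ I ^ N • (⊤ : Submodule (MvPolynomial σ R) (MvPowerSeries σ R)) := by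
    have := Submodule.mem_map_of_mem (f := e.symm.toLinearMap) he
    rwa [Submodule.map_smul'', Submodule.map_top, LinearMap.range_eq_top.mpr e.symm.surjective,
      AlgEquiv.toLinearMap_apply, AlgEquiv.symm_apply_apply] at this
  have hX : algebraMap (MvPolynomial σ R) (MvPowerSeries σ R) ∘ MvPolynomial.X = X :=
    funext MvPolynomial.coe_X
  rwa [Ideal.smul_top_eq_map, Submodule.restrictScalars_mem, Ideal.map_pow, Ideal.map_span,
    ← Set.range_comp, hX] at hF'

theorem span_range_X_eq_ker_constantCoeff :
    Ideal.span (Set.range X) = RingHom.ker (constantCoeff (σ := σ) (R := R)) := by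
  refine le_antisymm (Ideal.span_le.mpr ?_) fun F hF => ?_
  · rintro _ ⟨i, rfl⟩
    exact constantCoeff_X i
  · rw [← pow_one (Ideal.span _)]
    refine mem_pow_span_range_X_of_coeff_eq_zero fun d hd => ?_
    rw [Nat.lt_one_iff, Finsupp.degree_eq_zero_iff] at hd
    rwa [hd, coeff_zero_eq_constantCoeff_apply]

theorem constantCoeff_eq_zero_of_sub_X_mem_span {f : MvPowerSeries σ R} {i : σ}
    (h : f - X i ∈ Ideal.span (Set.range X)) : constantCoeff f = 0 := by
  rw [span_range_X_eq_ker_constantCoeff, RingHom.mem_ker, map_sub, constantCoeff_X,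
    sub_zero] at h
  exact h

theorem algHom_ext_of_X_mem {S : Type*} [CommRing S] [Algebra R S] {J : Ideal S} [IsHausdorff J S]
    {Θ Ψ : MvPowerSeries σ R →ₐ[R] S} (hX : ∀ i, Θ (X i) = Ψ (X i)) (hJ : ∀ i, Θ (X i) ∈ J) :
    Θ = Ψ := by
  have hpoly : ∀ p : MvPolynomial σ R, Θ p = Ψ p := fun p =>
    DFunLike.congr_fun (MvPolynomial.algHom_ext
      (f := Θ.comp (MvPolynomial.coeToMvPowerSeries.algHom R))
      (g := Ψ.comp (MvPolynomial.coeToMvPowerSeries.algHom R)) (by simpa using hX)) p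
  have hpow : ∀ Λ : MvPowerSeries σ R →ₐ[R] S, (∀ i, Λ (X i) ∈ J) →
      ∀ N, ∀ F ∈ Ideal.span (Set.range X) ^ N, Λ F ∈ J ^ N := by
    intro Λ hΛ N F hF
    refine Ideal.pow_right_mono (Ideal.map_le_iff_le_comap.mpr ?_) N
      (Ideal.map_pow Λ _ N ▸ Ideal.mem_map_of_mem Λ hF)
    exact Ideal.span_le.mpr (Set.range_subset_iff.mpr hΛ)
  ext F
  refine (IsHausdorff.eq_iff_smodEq (I := J)).mpr fun N => SModEq.sub_mem.mpr ?_
  have hrem : F - truncTotal N F ∈ Ideal.span (Set.range X) ^ N :=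
    mem_pow_span_range_X_of_coeff_eq_zero fun d hd => by
      rw [map_sub, MvPolynomial.coeff_coe, coeff_truncTotal _ hd, sub_self]
  have := sub_mem (hpow Θ hJ N _ hrem) (hpow Ψ (fun i => hX i ▸ hJ i) N _ hrem)
  rw [map_sub, map_sub, hpoly, sub_sub_sub_cancel_right] at this
  rwa [smul_eq_mul, Ideal.mul_top]

theorem bijective_substAlgHom {g : σ → MvPowerSeries σ R} (ha : HasSubst g)
    (hg : ∀ i, g i - X i ∈ Ideal.span (Set.range X) ^ 2) :
    Function.Bijective (substAlgHom (R := R) ha) := by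
  set I := Ideal.span (Set.range (X : σ → MvPowerSeries σ R))
  have hI : I = RingHom.ker constantCoeff := span_range_X_eq_ker_constantCoeff
  have hcc : ∀ i, constantCoeff (g i) = 0 := fun i =>
    constantCoeff_eq_zero_of_sub_X_mem_span (Ideal.pow_le_self two_ne_zero (hg i))
  let Φ : MvPowerSeries σ R →+* MvPowerSeries σ R := substAlgHom (R := R) ha
  have h₁ : ∀ F, Φ F - F ∈ I := fun F => by
    rw [hI, RingHom.mem_ker, map_sub, sub_eq_zero]
    exact constantCoeff_substAlgHom ha hcc F
  have h₂ := Φ.sub_mem_sq_of_mem_span h₁ <| by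
    rintro _ ⟨i, rfl⟩
    simpa only [Φ, RingHom.coe_coe, substAlgHom_X] using hg i
  have hΦ : ∀ N, ∀ F ∈ I ^ N • (⊤ : Ideal (MvPowerSeries σ R)),
      Φ F - F ∈ I ^ (N + 1) • (⊤ : Ideal (MvPowerSeries σ R)) := by
    simpa only [smul_eq_mul, Ideal.mul_top] using Φ.sub_mem_pow_succ_of_sub_mem_sq h₁ h₂
  exact ⟨AddMonoidHom.injective_of_sub_mem_pow_smul_top (Φ := Φ.toAddMonoidHom) hΦ,
    AddMonoidHom.surjective_of_sub_mem_pow_smul_top (Φ := Φ.toAddMonoidHom) hΦ⟩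

end MvPowerSeries

section Parameterization

variable {σ ι R : Type*} [CommRing R]

theorem constantCoeff_apply_of_local (φ : MvPowerSeries σ R →ₐ[R] (ι → PowerSeries R))
    (hφ : ∀ F, MvPowerSeries.constantCoeff F = 0 → ∀ j, constantCoeff (φ F j) = 0)
    (F : MvPowerSeries σ R) (j : ι) :
    constantCoeff (φ F j) = MvPowerSeries.constantCoeff F := by
  have := hφ (F - algebraMap R _ (MvPowerSeries.constantCoeff F))
    (by simp [MvPowerSeries.algebraMap_apply]) j
  rw [map_sub, AlgHom.commutes, Pi.sub_apply, Pi.algebraMap_apply, map_sub, sub_eq_zero] at this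
  simpa [← PowerSeries.C_eq_algebraMap] using this

theorem exists_sub_X_mem_sq_and_map_eq_of_congruence_mod_conductor [Finite σ] [Nonempty ι]
    (φ ψ : MvPowerSeries σ R →ₐ[R] (ι → PowerSeries R))
    (hφ : ∀ F, MvPowerSeries.constantCoeff F = 0 → ∀ j, constantCoeff (φ F j) = 0)
    (c : ι → ℕ) (C : ℕ) (hc : ∀ j, 1 ≤ c j) (hcC : ∀ j, c j ≤ C)
    (hcond : ∀ h : ι → PowerSeries R, (∀ j, X ^ c j ∣ h j) → h ∈ φ.range)
    (hcong : ∀ i j, X ^ (2 * C) ∣ φ (MvPowerSeries.X i) j - ψ (MvPowerSeries.X i) j) :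
    ∃ g : σ → MvPowerSeries σ R,
      (∀ i, g i - MvPowerSeries.X i ∈ Ideal.span (Set.range MvPowerSeries.X) ^ 2) ∧
        ∀ i, φ (g i) = ψ (MvPowerSeries.X i) := by
  obtain ⟨j₀⟩ := ‹Nonempty ι›
  choose u hu using hcong
  obtain ⟨A, hA : φ A = fun j => X ^ c j⟩ := hcond _ fun j => dvd_rfl
  choose B hB using fun i => hcond (fun j => X ^ (2 * C - c j) * u i j) fun j =>
    (pow_dvd_pow X (by have := hcC j; omega)).mul_right _
  replace hB : ∀ i, φ (B i) = fun j => X ^ (2 * C - c j) * u i j := hB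
  have hm : ∀ F, constantCoeff (φ F j₀) = 0 → F ∈ Ideal.span (Set.range MvPowerSeries.X) := by
    intro F hF
    rwa [MvPowerSeries.span_range_X_eq_ker_constantCoeff, RingHom.mem_ker,
      ← constantCoeff_apply_of_local φ hφ F j₀]
  have hAm : A ∈ Ideal.span (Set.range MvPowerSeries.X) := hm A <| by
    rw [hA, map_pow, constantCoeff_X, zero_pow (by have := hc j₀; omega)]
  have hBm : ∀ i, B i ∈ Ideal.span (Set.range MvPowerSeries.X) := fun i => hm (B i) <| by
    rw [hB i, map_mul, map_pow, constantCoeff_X,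
      zero_pow (by have := hc j₀; have := hcC j₀; omega), zero_mul]
  refine ⟨fun i => MvPowerSeries.X i - A * B i, fun i => ?_, fun i => funext fun j => ?_⟩
  · simpa [sq] using neg_mem (Ideal.mul_mem_mul hAm (hBm i))
  · have hpow : (X : PowerSeries R) ^ c j * X ^ (2 * C - c j) = X ^ (2 * C) := by
      rw [← pow_add]
      congr 1
      have := hcC j
      omega
    rw [map_sub, map_mul, hA, hB, Pi.sub_apply, Pi.mul_apply, ← mul_assoc, hpow]
    linear_combination hu i j

end Parameterization

theorem left_equivalence_of_congruence_mod_conductor_general {k : Type*} [Field k] {n r : ℕ}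
    (φ ψ : MvPowerSeries (Fin n) k →ₐ[k] (Fin r → PowerSeries k))
    (hφ : IsParameterization φ)
    (c : Fin r → ℕ) (hc : ∀ j, 1 ≤ c j)
    (hcond : ∀ h : Fin r → PowerSeries k,
      (∀ g : Fin r → PowerSeries k, h * g ∈ φ.range) ↔
        ∀ j, (X : PowerSeries k) ^ c j ∣ h j)
    (hcong : ∀ i j, (X : PowerSeries k) ^ (2 * Finset.univ.sup c) ∣
      (φ (MvPowerSeries.X i) j - ψ (MvPowerSeries.X i) j)) :
    ∃ σ : MvPowerSeries (Fin n) k ≃ₐ[k] MvPowerSeries (Fin n) k,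
      ∀ F, φ (σ F) = ψ F := by
  rcases isEmpty_or_nonempty (Fin r) with hr | hr
  · exact ⟨AlgEquiv.refl, fun F => Subsingleton.elim _ _⟩
  obtain ⟨g, hgX, hφg⟩ := exists_sub_X_mem_sq_and_map_eq_of_congruence_mod_conductor φ ψ hφ.1 c _
    hc (fun j => Finset.le_sup (Finset.mem_univ j)) (fun h hh => by simpa using (hcond h).2 hh 1)
    hcong
  have hcc : ∀ i, MvPowerSeries.constantCoeff (g i) = 0 := fun i =>
    MvPowerSeries.constantCoeff_eq_zero_of_sub_X_mem_span
      (Ideal.pow_le_self two_ne_zero (hgX i))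
  have ha := MvPowerSeries.hasSubst_of_constantCoeff_zero hcc
  refine ⟨AlgEquiv.ofBijective _ (MvPowerSeries.bijective_substAlgHom ha hgX),
    fun F => funext fun j => ?_⟩
  have hcomp : (Pi.evalAlgHom k _ j).comp (φ.comp (MvPowerSeries.substAlgHom ha)) =
      (Pi.evalAlgHom k _ j).comp ψ := by
    refine MvPowerSeries.algHom_ext_of_X_mem (J := Ideal.span {X}) (fun i => ?_) (fun i => ?_)
    · simp [MvPowerSeries.subst_X ha, hφg]
    · rw [Ideal.mem_span_singleton, X_dvd_iff]
      simp [MvPowerSeries.subst_X ha, constantCoeff_apply_of_local φ hφ.1, hcc]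
  exact DFunLike.congr_fun hcomp F

/-- Let `φ, ψ` be parameterizations, and suppose the conductor of `φ`
is `C_φ = f·R̃` with `f = (t₁^{c₁},...,tᵣ^{cᵣ})`, `cⱼ ≥ 1`, and `c = max cⱼ`.
If `φ(xᵢ) ≡ ψ(xᵢ) mod m̃^{2c}` for all `i`, then there is a `k`-algebra
automorphism `σ` of `k[[x₁,...,xₙ]]` with `φ ∘ σ = ψ`; in particular `φ` and `ψ`
are left-equivalent. -/
theorem left_equivalence_of_congruence_mod_conductor {k : Type*} [Field k] {n r : ℕ}
    (φ ψ : MvPowerSeries (Fin n) k →ₐ[k] (Fin r → PowerSeries k))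
    (hφ : IsParameterization φ) (hψ : IsParameterization ψ)
    (c : Fin r → ℕ) (hc : ∀ j, 1 ≤ c j)
    (hcond : ∀ h : Fin r → PowerSeries k,
      (∀ g : Fin r → PowerSeries k, h * g ∈ φ.range) ↔
        ∀ j, (X : PowerSeries k) ^ c j ∣ h j)
    (hcong : ∀ i j, (X : PowerSeries k) ^ (2 * Finset.univ.sup c) ∣
      (φ (MvPowerSeries.X i) j - ψ (MvPowerSeries.X i) j)) :
    ∃ σ : MvPowerSeries (Fin n) k ≃ₐ[k] MvPowerSeries (Fin n) k,
      ∀ F, φ (σ F) = ψ F :=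
  left_equivalence_of_congruence_mod_conductor_general φ ψ hφ c hc hcond hcong
end

section
/- Let k be a field, P = k[[x]], I₁, I₂ ⊆ P ideals with P/I₁ and P/I₂ reduced curve singularities parameterized into k[[t₁]] and k[[t₂]] respectively, with delta invariants δ₁, δ₂. If dim_k P/(I₁+I₂) < ∞, then the delta invariant of P/(I₁ ∩ I₂) (embedded diagonally into k[[t₁]] ⊕ k[[t₂]]) equals δ₁ + δ₂ + dim_k P/(I₁+I₂). -/
/-!
For linear maps `fᵢ : A → Mᵢ`, the image `R` of `f₁.prod f₂` lies in `range f₁ × range f₂`, and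
`a ↦ (f₁ a, 0) mod R` identifies `A ⧸ (ker f₁ ⊔ ker f₂)` with `(range f₁ × range f₂) ⧸ R`: this is
the exact sequence `0 → A/(I₁ ∩ I₂) → A/I₁ ⊕ A/I₂ → A/(I₁ + I₂) → 0`. Additivity of dimension
along `R ≤ range f₁ × range f₂ ≤ M₁ × M₂` then gives `δ = δ₁ + δ₂ + dim_k A/(I₁ + I₂)`.
-/

open LinearMap Submodule

section Ring

variable {R A M₁ M₂ : Type*} [Ring R] [AddCommGroup A] [Module R A]
  [AddCommGroup M₁] [Module R M₁] [AddCommGroup M₂] [Module R M₂]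

noncomputable def Submodule.quotientProdEquiv (p : Submodule R M₁) (q : Submodule R M₂) :
    ((M₁ × M₂) ⧸ p.prod q) ≃ₗ[R] (M₁ ⧸ p) × (M₂ ⧸ q) :=
  (quotEquivOfEq _ _ (by rw [ker_prodMap, ker_mkQ, ker_mkQ])).trans
    (quotKerEquivOfSurjective (p.mkQ.prodMap q.mkQ)
      ((mkQ_surjective p).prodMap (mkQ_surjective q)))

namespace LinearMap

variable (f₁ : A →ₗ[R] M₁) (f₂ : A →ₗ[R] M₂)

theorem range_prod_le_prod_range : range (f₁.prod f₂) ≤ (range f₁).prod (range f₂) := by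
  rintro _ ⟨a, rfl⟩
  exact ⟨⟨a, rfl⟩, ⟨a, rfl⟩⟩

def inlModRangeProd : A →ₗ[R] (M₁ × M₂) ⧸ range (f₁.prod f₂) :=
  (range (f₁.prod f₂)).mkQ ∘ₗ inl R M₁ M₂ ∘ₗ f₁

theorem ker_inlModRangeProd : ker (inlModRangeProd f₁ f₂) = ker f₁ ⊔ ker f₂ := by
  ext a
  simp only [inlModRangeProd, mem_ker, coe_comp, Function.comp_apply, mkQ_apply, inl_apply,
    Quotient.mk_eq_zero, mem_range, mem_sup]
  constructor
  · rintro ⟨c, hc⟩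
    have hc₁ : f₁ c = f₁ a := congrArg Prod.fst hc
    have hc₂ : f₂ c = 0 := congrArg Prod.snd hc
    exact ⟨a - c, by rw [map_sub, hc₁, sub_self], c, hc₂, sub_add_cancel a c⟩
  · rintro ⟨u, hu, v, hv, rfl⟩
    exact ⟨v, Prod.ext (by simp [hu]) hv⟩

theorem range_inlModRangeProd :
    range (inlModRangeProd f₁ f₂) = ((range f₁).prod (range f₂)).map (range (f₁.prod f₂)).mkQ := by
  apply le_antisymm
  · rintro _ ⟨a, rfl⟩
    exact ⟨(f₁ a, 0), ⟨⟨a, rfl⟩, zero_mem _⟩, rfl⟩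
  · rintro _ ⟨⟨_, _⟩, ⟨⟨a, rfl⟩, ⟨b, rfl⟩⟩, rfl⟩
    refine ⟨a - b, (Submodule.Quotient.eq _).2 ⟨-b, Prod.ext ?_ ?_⟩⟩ <;> simp

end LinearMap

end Ring

universe u

namespace LinearMap

variable {K : Type*} {A M₁ M₂ : Type u} [DivisionRing K] [AddCommGroup A] [Module K A]
  [AddCommGroup M₁] [Module K M₁] [AddCommGroup M₂] [Module K M₂]
  (f₁ : A →ₗ[K] M₁) (f₂ : A →ₗ[K] M₂)

theorem rank_quotient_range_prod :
    Module.rank K ((M₁ × M₂) ⧸ range (f₁.prod f₂)) =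
      Module.rank K (M₁ ⧸ range f₁) + Module.rank K (M₂ ⧸ range f₂) +
        Module.rank K (A ⧸ (ker f₁ ⊔ ker f₂)) := by
  set S := ((range f₁).prod (range f₂)).map (range (f₁.prod f₂)).mkQ
  have hquot : (((M₁ × M₂) ⧸ range (f₁.prod f₂)) ⧸ S) ≃ₗ[K] (M₁ ⧸ range f₁) × (M₂ ⧸ range f₂) :=
    (quotientQuotientEquivQuotient _ _ (range_prod_le_prod_range f₁ f₂)).trans
      (quotientProdEquiv _ _)
  have hsub : (A ⧸ (ker f₁ ⊔ ker f₂)) ≃ₗ[K] S :=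
    (quotEquivOfEq _ _ (ker_inlModRangeProd f₁ f₂).symm).trans
      ((inlModRangeProd f₁ f₂).quotKerEquivRange.trans
        (LinearEquiv.ofEq _ _ (range_inlModRangeProd f₁ f₂)))
  rw [← rank_quotient_add_rank S, hquot.rank_eq, hsub.rank_eq, rank_prod']

theorem finrank_quotient_range_prod [FiniteDimensional K (M₁ ⧸ range f₁)]
    [FiniteDimensional K (M₂ ⧸ range f₂)] [FiniteDimensional K (A ⧸ (ker f₁ ⊔ ker f₂))] :
    Module.finrank K ((M₁ × M₂) ⧸ range (f₁.prod f₂)) =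
      Module.finrank K (M₁ ⧸ range f₁) + Module.finrank K (M₂ ⧸ range f₂) +
        Module.finrank K (A ⧸ (ker f₁ ⊔ ker f₂)) := by
  have h₁ := Module.rank_lt_aleph0 K (M₁ ⧸ range f₁)
  have h₂ := Module.rank_lt_aleph0 K (M₂ ⧸ range f₂)
  have h₃ := Module.rank_lt_aleph0 K (A ⧸ (ker f₁ ⊔ ker f₂))
  rw [Module.finrank, rank_quotient_range_prod,
    Cardinal.toNat_add (Cardinal.add_lt_aleph0 h₁ h₂) h₃, Cardinal.toNat_add h₁ h₂]
  rfl

end LinearMap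

open PowerSeries

theorem delta_of_two_branches_general {k : Type*} [Field k] {n : ℕ}
    (φ₁ φ₂ : MvPowerSeries (Fin n) k →ₐ[k] PowerSeries k)
    (hδ₁ : FiniteDimensional k (PowerSeries k ⧸ Subalgebra.toSubmodule φ₁.range))
    (hδ₂ : FiniteDimensional k (PowerSeries k ⧸ Subalgebra.toSubmodule φ₂.range))
    (I₁ I₂ : Ideal (MvPowerSeries (Fin n) k))
    (hI₁ : I₁ = RingHom.ker φ₁.toRingHom) (hI₂ : I₂ = RingHom.ker φ₂.toRingHom)
    (hfin : FiniteDimensional k (MvPowerSeries (Fin n) k ⧸ (I₁ + I₂))) :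
    Module.finrank k ((PowerSeries k × PowerSeries k) ⧸
        Subalgebra.toSubmodule (φ₁.prod φ₂).range) =
      Module.finrank k (PowerSeries k ⧸ Subalgebra.toSubmodule φ₁.range) +
      Module.finrank k (PowerSeries k ⧸ Subalgebra.toSubmodule φ₂.range) +
      Module.finrank k (MvPowerSeries (Fin n) k ⧸ (I₁ + I₂)) := by
  have hker : (I₁ + I₂).restrictScalars k = ker φ₁.toLinearMap ⊔ ker φ₂.toLinearMap := by
    rw [Submodule.add_eq_sup, restrictScalars_sup, hI₁, hI₂]
    rfl
  let e := (Submodule.Quotient.restrictScalarsEquiv k (I₁ + I₂)).symm.trans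
    (quotEquivOfEq _ _ hker)
  have : FiniteDimensional k (PowerSeries k ⧸ range φ₁.toLinearMap) := hδ₁
  have : FiniteDimensional k (PowerSeries k ⧸ range φ₂.toLinearMap) := hδ₂
  have : FiniteDimensional k _ := Module.Finite.equiv e
  rw [e.finrank_eq]
  exact finrank_quotient_range_prod φ₁.toLinearMap φ₂.toLinearMap

/-- Let `P = k[[x]]`, and `I₁ = Ker φ₁`, `I₂ = Ker φ₂` for
parameterizations `φ₁ : P → k[[t₁]]`, `φ₂ : P → k[[t₂]]` of reduced curve
singularities with delta invariants `δ₁, δ₂`. If `dim_k P/(I₁+I₂) < ∞`, then the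
delta invariant of `P/(I₁ ∩ I₂)`, embedded via `(φ₁,φ₂)` into `k[[t₁]] ⊕ k[[t₂]]`,
equals `δ₁ + δ₂ + dim_k P/(I₁+I₂)`. -/
theorem delta_of_two_branches {k : Type*} [Field k] {n : ℕ}
    (φ₁ φ₂ : MvPowerSeries (Fin n) k →ₐ[k] PowerSeries k)
    (hloc₁ : ∀ F, (MvPowerSeries.constantCoeff : MvPowerSeries (Fin n) k →+* k) F = 0 →
      constantCoeff (φ₁ F) = 0)
    (hloc₂ : ∀ F, (MvPowerSeries.constantCoeff : MvPowerSeries (Fin n) k →+* k) F = 0 →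
      constantCoeff (φ₂ F) = 0)
    (hne₁ : ∃ i, φ₁ (MvPowerSeries.X i) ≠ 0)
    (hne₂ : ∃ i, φ₂ (MvPowerSeries.X i) ≠ 0)
    (hδ₁ : FiniteDimensional k (PowerSeries k ⧸ Subalgebra.toSubmodule φ₁.range))
    (hδ₂ : FiniteDimensional k (PowerSeries k ⧸ Subalgebra.toSubmodule φ₂.range))
    (I₁ I₂ : Ideal (MvPowerSeries (Fin n) k))
    (hI₁ : I₁ = RingHom.ker φ₁.toRingHom) (hI₂ : I₂ = RingHom.ker φ₂.toRingHom)
    (hfin : FiniteDimensional k (MvPowerSeries (Fin n) k ⧸ (I₁ + I₂))) :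
    Module.finrank k ((PowerSeries k × PowerSeries k) ⧸
        Subalgebra.toSubmodule (φ₁.prod φ₂).range) =
      Module.finrank k (PowerSeries k ⧸ Subalgebra.toSubmodule φ₁.range) +
      Module.finrank k (PowerSeries k ⧸ Subalgebra.toSubmodule φ₂.range) +
      Module.finrank k (MvPowerSeries (Fin n) k ⧸ (I₁ + I₂)) :=
  delta_of_two_branches_general φ₁ φ₂ hδ₁ hδ₂ I₁ I₂ hI₁ hI₂ hfin
end

section
/- Let k be a field and R ⊆ S = k[[t₁]] ⊕ ... ⊕ k[[tᵣ]] a local k-subalgebra such that S is a finite R-module and dim_k(S/R) < ∞. Then R ↪ S is birational: it induces a bijection on minimal primes and isomorphisms of the corresponding localizations at minimal primes. -/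
/-!
Write `t = (t₁, …, t_r) ∈ S`. As `S/R` is finite-dimensional, `p(t) ∈ R` for some nonzero
polynomial `p` with `p(0) = 0`; this `f = p(t)` is a non-zero-divisor of `S` and a non-unit of
`R`. Since `S/R` is a finitely generated `R`-module of finite length, Nakayama's lemma gives
`fⁿ S ⊆ R` for some `n`. Such a conductor element `g = fⁿ` lies in no minimal prime of `S`,
so it clears denominators in every `S_p` and separates the minimal primes of `S` from one
another; and minimal primes of the subring `R` are always contracted from minimal primes of `S`.
-/

/-- `φ : A →+* B` is birational: it induces a bijection between the minimal primes
of `B` and those of `A`, and for every minimal prime `p` of `B` the induced map of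
localizations `A_{φ⁻¹(p)} → B_p` is an isomorphism. -/
def RingHom.IsBirationalMap {A B : Type*} [CommRing A] [CommRing B] (φ : A →+* B) : Prop :=
  Set.BijOn (Ideal.comap φ) (minimalPrimes B) (minimalPrimes A) ∧
  ∀ p (hp : p ∈ minimalPrimes B),
    haveI : p.IsPrime := hp.1.1
    Function.Bijective (Localization.localRingHom (Ideal.comap φ p) p φ rfl)

open Polynomial

namespace RingHom

variable {A B : Type*} [CommRing A] [CommRing B] {φ : A →+* B} {g : A}

theorem le_of_comap_le_comap_of_mul_mem_range (hg : ∀ b, ∃ a, φ a = φ g * b)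
    {P P' : Ideal B} [P'.IsPrime] (hgP' : φ g ∉ P') (h : P.comap φ ≤ P'.comap φ) : P ≤ P' := by
  intro b hb
  obtain ⟨a, ha⟩ := hg b
  have haP' : φ a ∈ P' := h (show φ a ∈ P by rw [ha]; exact P.mul_mem_left _ hb)
  rw [ha] at haP'
  exact (Ideal.IsPrime.mem_or_mem ‹_› haP').resolve_left hgP'

theorem bijective_localRingHom_of_mul_mem_range (hg : ∀ b, ∃ a, φ a = φ g * b)
    (hφ : Function.Injective φ) (p : Ideal B) [p.IsPrime] (hgp : φ g ∉ p) :
    Function.Bijective (Localization.localRingHom (p.comap φ) p φ rfl) := by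
  have primeCompl_of_eq {u : B} (hu : u ∉ p) {c : A} (hc : φ c = φ g * u) :
      c ∈ (p.comap φ).primeCompl := fun h =>
    (Ideal.IsPrime.mem_or_mem ‹_› (hc ▸ h : φ g * u ∈ p)).elim hgp hu
  constructor
  · rw [injective_iff_map_eq_zero]
    intro x hx
    obtain ⟨⟨a, s⟩, rfl⟩ := IsLocalization.mk'_surjective (p.comap φ).primeCompl x
    rw [Localization.localRingHom_mk', IsLocalization.mk'_eq_zero_iff] at hx
    obtain ⟨⟨u, hu⟩, hua⟩ := hx
    obtain ⟨c, hc⟩ := hg u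
    refine (IsLocalization.mk'_eq_zero_iff _ _).mpr ⟨⟨c, primeCompl_of_eq hu hc⟩, hφ ?_⟩
    simp only [map_mul, map_zero, hc, mul_assoc, hua, mul_zero]
  · intro y
    obtain ⟨⟨b, ⟨t, ht⟩⟩, rfl⟩ := IsLocalization.mk'_surjective p.primeCompl y
    obtain ⟨a, ha⟩ := hg b
    obtain ⟨c, hc⟩ := hg t
    refine ⟨IsLocalization.mk' _ a ⟨c, primeCompl_of_eq ht hc⟩, ?_⟩
    rw [Localization.localRingHom_mk', IsLocalization.mk'_eq_iff_eq]
    congr 1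
    change t * φ a = φ c * b
    rw [ha, hc]
    ring

theorem isBirationalMap_of_mul_mem_range (hφ : Function.Injective φ)
    (hg : ∀ b, ∃ a, φ a = φ g * b) (hreg : φ g ∈ nonZeroDivisors B) : φ.IsBirationalMap := by
  have hgp {p : Ideal B} (hp : p ∈ minimalPrimes B) : φ g ∉ p := fun hgp =>
    notMem_nonZeroDivisors_of_mem_mem_minimalPrimes hgp hp hreg
  have eq_of_comap_le {P p : Ideal B} (hP : P ∈ minimalPrimes B) (hp : p ∈ minimalPrimes B)
      (h : P.comap φ ≤ p.comap φ) : P = p :=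
    have := hp.isPrime
    have hle := le_of_comap_le_comap_of_mul_mem_range hg (hgp hp) h
    le_antisymm hle (hp.2 hP.1 hle)
  have surj : Set.SurjOn (Ideal.comap φ) (minimalPrimes B) (minimalPrimes A) := fun q hq =>
    Ideal.exists_minimalPrimes_comap_eq φ q (by rwa [Ideal.comap_bot_of_injective φ hφ])
  have mapsTo : Set.MapsTo (Ideal.comap φ) (minimalPrimes B) (minimalPrimes A) := by
    intro p hp
    have := hp.isPrime
    refine ⟨⟨inferInstance, bot_le⟩, fun q hq hqp => ?_⟩
    have := hq.1
    obtain ⟨q₀, hq₀, hq₀q⟩ := Ideal.exists_minimalPrimes_le (bot_le : ⊥ ≤ q)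
    obtain ⟨P, hP, rfl⟩ := surj hq₀
    exact eq_of_comap_le hP hp (hq₀q.trans hqp) ▸ hq₀q
  exact ⟨⟨mapsTo, fun p₁ hp₁ p₂ hp₂ h => eq_of_comap_le hp₁ hp₂ h.le, surj⟩,
    fun p hp => have := hp.isPrime; bijective_localRingHom_of_mul_mem_range hg hφ p (hgp hp)⟩

end RingHom

theorem IsArtinian.exists_pow_smul_eq_zero {A Q : Type*} [CommRing A] [AddCommGroup Q] [Module A Q]
    [Module.Finite A Q] [IsArtinian A Q] {f : A} (hf : f ∈ Ideal.jacobson ⊥) :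
    ∃ n : ℕ, ∀ x : Q, f ^ n • x = 0 := by
  obtain ⟨n, hn⟩ := IsArtinian.range_smul_pow_stabilizes Q f
  let φ : Q →ₗ[A] Q := f ^ n • LinearMap.id
  have hφ : LinearMap.range φ ≤ Ideal.span {f} • LinearMap.range φ := by
    rintro _ ⟨x, rfl⟩
    obtain ⟨y, hy⟩ : φ x ∈ LinearMap.range (f ^ (n + 1) • LinearMap.id : Q →ₗ[A] Q) :=
      hn (n + 1) n.le_succ ▸ LinearMap.mem_range_self φ x
    rw [← hy]
    simpa [φ, pow_succ', mul_smul] using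
      Submodule.smul_mem_smul (Ideal.mem_span_singleton_self f) (LinearMap.mem_range_self φ y)
  have hφ_bot : LinearMap.range φ = ⊥ := Submodule.eq_bot_of_le_smul_of_le_jacobson_bot _ _
    (Submodule.map_top φ ▸ Module.Finite.fg_top.map φ) hφ
    (by rwa [Ideal.span_singleton_le_iff_mem])
  exact ⟨n, fun x => (Submodule.eq_bot_iff _).mp hφ_bot _ ⟨x, rfl⟩⟩

theorem Subalgebra.exists_pow_mul_mem {k S : Type*} [CommRing k] [CommRing S] [Algebra k S]
    (R : Subalgebra k S) [Module.Finite R S] [IsArtinian k (S ⧸ Subalgebra.toSubmodule R)]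
    {f : R} (hf : f ∈ Ideal.jacobson ⊥) : ∃ n : ℕ, ∀ s : S, (f : S) ^ n * s ∈ R := by
  let N : Submodule R S := LinearMap.range (Algebra.linearMap R S)
  have hN : N.restrictScalars k = Subalgebra.toSubmodule R := by
    ext x
    exact ⟨fun ⟨a, ha⟩ => ha ▸ a.2, fun hx => ⟨⟨x, hx⟩, rfl⟩⟩
  have : IsArtinian k (S ⧸ N) := isArtinian_of_linearEquiv
    ((Submodule.quotEquivOfEq _ _ hN).symm.trans (Submodule.Quotient.restrictScalarsEquiv k N))
  have : IsArtinian R (S ⧸ N) := isArtinian_of_tower k this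
  obtain ⟨n, hn⟩ := IsArtinian.exists_pow_smul_eq_zero (Q := S ⧸ N) hf
  refine ⟨n, fun s => ?_⟩
  have := hn (N.mkQ s)
  rw [← map_smul, Submodule.mkQ_apply, Submodule.Quotient.mk_eq_zero] at this
  obtain ⟨a, ha⟩ := this
  have : (f : S) ^ n * s = a := by rw [← SubmonoidClass.coe_pow]; exact ha.symm
  exact this ▸ a.2

theorem Subalgebra.exists_aeval_mem {k S : Type*} [Field k] [CommRing S] [Algebra k S]
    (R : Subalgebra k S) [FiniteDimensional k (S ⧸ Subalgebra.toSubmodule R)] (u : S) :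
    ∃ p : k[X], p ≠ 0 ∧ p.coeff 0 = 0 ∧ aeval u p ∈ R := by
  let L : k[X] →ₗ[k] S ⧸ Subalgebra.toSubmodule R :=
    (Subalgebra.toSubmodule R).mkQ ∘ₗ (aeval u).toLinearMap ∘ₗ LinearMap.mulLeft k X
  obtain ⟨p, hpL, hp⟩ : ∃ p, L p = 0 ∧ p ≠ 0 := by
    by_contra! h
    exact Polynomial.not_finite (Module.Finite.of_injective L
      ((injective_iff_map_eq_zero L).mpr h))
  refine ⟨X * p, mul_ne_zero X_ne_zero hp, coeff_X_mul_zero p, ?_⟩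
  simpa [L, Submodule.Quotient.mk_eq_zero] using hpL

theorem Pi.mem_nonZeroDivisors_of_forall_ne_zero {ι : Type*} {A : ι → Type*}
    [∀ i, MonoidWithZero (A i)] [∀ i, NoZeroDivisors (A i)] {x : ∀ i, A i} (hx : ∀ i, x i ≠ 0) :
    x ∈ nonZeroDivisors (∀ i, A i) :=
  mem_nonZeroDivisors_iff.mpr
    ⟨fun _ hy => funext fun i => (mul_eq_zero.mp (congrFun hy i)).resolve_left (hx i),
     fun _ hy => funext fun i => (mul_eq_zero.mp (congrFun hy i)).resolve_right (hx i)⟩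

theorem PowerSeries.exists_mem_maximalIdeal_forall_ne_zero {k ι : Type*} [Field k]
    (R : Subalgebra k (ι → PowerSeries k)) [IsLocalRing R]
    [FiniteDimensional k ((ι → PowerSeries k) ⧸ Subalgebra.toSubmodule R)] :
    ∃ f ∈ IsLocalRing.maximalIdeal R, ∀ j, (f : ι → PowerSeries k) j ≠ 0 := by
  obtain ⟨p, hp, hp_coeff, hpR⟩ := R.exists_aeval_mem (fun _ => PowerSeries.X)
  have hcoord (j : ι) : Polynomial.aeval (fun _ => PowerSeries.X) p j = (p : PowerSeries k) := by
    simp [aeval_pi_apply₂, aeval_def, PowerSeries.algebraMap_eq, eval₂_C_X_eq_coe]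
  refine ⟨⟨_, hpR⟩, ?_, fun j => by simpa [hcoord] using hp⟩
  obtain ⟨j⟩ : Nonempty ι := by
    by_contra h
    rw [not_nonempty_iff] at h
    exact zero_ne_one (α := R) (Subsingleton.elim _ _)
  rw [IsLocalRing.mem_maximalIdeal, mem_nonunits_iff]
  intro hunit
  have := (hunit.map R.val).map (Pi.evalRingHom _ j)
  rw [PowerSeries.isUnit_iff_constantCoeff] at this
  simp [hcoord, hp_coeff] at this

/-- Let `R ⊆ S = k[[t₁]] ⊕ ... ⊕ k[[tᵣ]]` be a local `k`-subalgebra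
such that `S` is a finite `R`-module and `dim_k S/R < ∞`. Then the inclusion
`R ↪ S` is birational. -/
theorem birational_of_finite_codim {k : Type*} [Field k] {r : ℕ}
    (R : Subalgebra k (Fin r → PowerSeries k))
    [IsLocalRing ↥R]
    (hfinmod : Module.Finite ↥R (Fin r → PowerSeries k))
    (hfin : FiniteDimensional k
      ((Fin r → PowerSeries k) ⧸ Subalgebra.toSubmodule R)) :
    RingHom.IsBirationalMap (Subalgebra.val R).toRingHom := by
  obtain ⟨f, hf_max, hf_ne⟩ := PowerSeries.exists_mem_maximalIdeal_forall_ne_zero R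
  obtain ⟨n, hn⟩ := R.exists_pow_mul_mem (IsLocalRing.maximalIdeal_le_jacobson _ hf_max)
  refine RingHom.isBirationalMap_of_mul_mem_range (g := f ^ n) Subtype.val_injective
    (fun s => ⟨⟨_, hn s⟩, rfl⟩) (Pi.mem_nonZeroDivisors_of_forall_ne_zero fun j => ?_)
  simpa using pow_ne_zero n (hf_ne j)
end

section
/- Let φ : ℤ[[t]]-parameterization be given by φⁱ(t) ∈ ℤ[[t]], i = 1,...,n, and for a prime number p let φ_p be the reduction mod p and φ_0 the parameterization over ℚ. If for some prime p the parameterization φ_p is primitive with δ_{𝔽_p}(R_p) = dim_{𝔽_p} 𝔽_p[[t]]/𝔽_p[[φ_p¹,...,φ_pⁿ]] < ∞, then δ_ℚ(R_0) = dim_ℚ ℚ[[t]]/ℚ[[φ_0¹,...,φ_0ⁿ]] < ∞ and δ_ℚ(R_0) ≤ δ_{𝔽_p}(R_p). -/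
/-!
Over a field `K`, let `A ⊆ K⟦t⟧` be the image of the parameterization and `Γ` the set of orders
of its nonzero elements. Algebra maps out of power series in finitely many variables do not lower
the order, so modulo `t ^ N` the algebra `A` is spanned by the monomials `φ ^ α`. Over `𝔽_p` and
over `ℚ` these are the reductions of the same integer vectors, and linear independence mod `p`
lifts to `ℚ`; hence every truncation of `A_0` has codimension at most `δ_p`, and `Γ_0` has at most
`δ_p` gaps. Two consecutive values `m, m + 1 ∈ Γ_0`, attained by `u` and `v`, give elements
`u ^ a * v ^ b` of every order `≥ m ^ 2` whose preimages have order `≥ a + b`, so the greedy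
expansion of a series of order `≥ m ^ 2` converges upstairs: `t ^ (m ^ 2) ⊆ A_0`. Then
`K⟦t⟧ ⧸ A_0 ≃ K ^ (m ^ 2) ⧸ (truncation of A_0)`, of dimension at most `δ_p`.
-/

open PowerSeries

namespace PowerSeries

variable {R : Type*} [Semiring R]

theorem natCast_le_order_iff_X_pow_dvd {φ : R⟦X⟧} {n : ℕ} : (n : ℕ∞) ≤ φ.order ↔ X ^ n ∣ φ := by
  rw [order_eq_emultiplicity_X]
  exact pow_dvd_iff_le_emultiplicity.symm

theorem constantCoeff_map {S : Type*} [Semiring S] (φ : R →+* S) (g : R⟦X⟧) :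
    constantCoeff (map φ g) = φ (constantCoeff g) := by
  rw [← coeff_zero_eq_constantCoeff_apply, coeff_map, coeff_zero_eq_constantCoeff_apply]

end PowerSeries

namespace MvPowerSeries

variable {σ R : Type*}

section CommSemiring

variable [CommSemiring R]

theorem exists_eq_sum_X_mul_of_le_order [Fintype σ] [LinearOrder σ] {F : MvPowerSeries σ R}
    {d : ℕ} (hF : ((d + 1 : ℕ) : ℕ∞) ≤ F.order) :
    ∃ G : σ → MvPowerSeries σ R, (∀ i, (d : ℕ∞) ≤ (G i).order) ∧ F = ∑ i, X i * G i := by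
  -- the coefficient of `β ≠ 0` goes to the smallest variable occurring in `β`
  let G : σ → MvPowerSeries σ R := fun i β =>
    if (β + Finsupp.single i 1).support.min = (i : WithTop σ) then
      coeff (β + Finsupp.single i 1) F else 0
  have hG : ∀ i β, coeff β (G i) = if (β + Finsupp.single i 1).support.min = (i : WithTop σ) then
      coeff (β + Finsupp.single i 1) F else 0 :=
    fun _ _ => rfl
  refine ⟨G, fun i => le_order fun β hβ => ?_, ext fun β => ?_⟩
  · rw [hG, ite_eq_right_iff]
    refine fun _ => coeff_of_lt_order ?_
    have hβ : Finsupp.degree β < d := by exact_mod_cast hβ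
    rw [map_add, Finsupp.degree_single]
    exact lt_of_lt_of_le (by exact_mod_cast (by omega : Finsupp.degree β + 1 < d + 1)) hF
  have hterm : ∀ i, coeff β (X i * G i) =
      if β.support.min = (i : WithTop σ) then coeff β F else 0 := by
    intro i
    rw [X, coeff_monomial_mul]
    by_cases hi : Finsupp.single i 1 ≤ β
    · rw [if_pos hi, one_mul, hG, tsub_add_cancel_of_le hi]
    · rw [if_neg hi, if_neg]
      exact fun hmin => hi (Finsupp.single_le_iff.mpr
        (Nat.one_le_iff_ne_zero.mpr (Finsupp.mem_support_iff.mp (Finset.mem_of_min hmin))))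
  rw [map_sum, Finset.sum_congr rfl fun i _ => hterm i]
  cases hmin : β.support.min with
  | top =>
    rw [Finset.min_eq_top, Finsupp.support_eq_empty] at hmin
    subst hmin
    simp only [WithTop.top_ne_coe, if_false, Finset.sum_const_zero]
    exact coeff_of_lt_order (d := 0) (lt_of_lt_of_le (by simp) hF)
  | coe i₀ =>
    simp only [WithTop.coe_eq_coe, Finset.sum_ite_eq, Finset.mem_univ, if_true]

theorem le_order_map_of_constantCoeff_map_X [Finite σ] (ψ : MvPowerSeries σ R →+* R⟦X⟧)
    (hψ : ∀ i, PowerSeries.constantCoeff (ψ (X i)) = 0) (F : MvPowerSeries σ R) :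
    F.order ≤ (ψ F).order := by
  cases nonempty_fintype σ
  let : LinearOrder σ := LinearOrder.lift' _ (Fintype.equivFin σ).injective
  refine ENat.forall_natCast_le_iff_le.mp fun d => ?_
  induction d generalizing F with
  | zero => simp
  | succ d ih =>
    intro hF
    obtain ⟨G, hG, rfl⟩ := exists_eq_sum_X_mul_of_le_order hF
    rw [PowerSeries.natCast_le_order_iff_X_pow_dvd, map_sum, pow_succ']
    refine Finset.dvd_sum fun i _ => ?_
    rw [map_mul]
    exact mul_dvd_mul (PowerSeries.X_dvd_iff.mpr (hψ i))
      (PowerSeries.natCast_le_order_iff_X_pow_dvd.mp (ih (G i) (hG i)))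

theorem algHom_coe_eq_aeval {A : Type*} [CommSemiring A] [Algebra R A]
    (ψ : MvPowerSeries σ R →ₐ[R] A) (P : MvPolynomial σ R) :
    ψ P = MvPolynomial.aeval (fun i => ψ (X i)) P := by
  have : ψ.comp (MvPolynomial.coeToMvPowerSeries.algHom R) =
      MvPolynomial.aeval fun i => ψ (X i) :=
    MvPolynomial.algHom_ext fun i => by simp
  simpa using DFunLike.congr_fun this P

end CommSemiring

theorem constantCoeff_map_of_constantCoeff_map_X [CommRing R] [Finite σ]
    (ψ : MvPowerSeries σ R →ₐ[R] R⟦X⟧) (hψ : ∀ i, PowerSeries.constantCoeff (ψ (X i)) = 0)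
    (F : MvPowerSeries σ R) : PowerSeries.constantCoeff (ψ F) = constantCoeff F := by
  have hF : (1 : ℕ∞) ≤ (F - C (constantCoeff F)).order :=
    one_le_order_iff_constCoeff_eq_zero.mpr (by simp)
  have hψF := PowerSeries.one_le_order_iff_constCoeff_eq_zero.mp
    (hF.trans (le_order_map_of_constantCoeff_map_X ψ.toRingHom hψ _))
  have hC : ψ (C (constantCoeff F)) = PowerSeries.C (constantCoeff F) := ψ.commutes _
  rwa [AlgHom.toRingHom_eq_coe, RingHom.coe_coe, map_sub, map_sub, hC,
    PowerSeries.constantCoeff_C, sub_eq_zero] at hψF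

theorem exists_le_order_sub_sum [Ring R] (T : ℕ → MvPowerSeries σ R) (B : ℕ → ℕ)
    (hT : ∀ d j, B d ≤ j → (d : ℕ∞) ≤ (T j).order) :
    ∃ F : MvPowerSeries σ R,
      ∀ d J, B d ≤ J → (d : ℕ∞) ≤ (F - ∑ j ∈ Finset.range J, T j).order := by
  have hvanish : ∀ β d J, Finsupp.degree β < d → B d ≤ J → ∀ j ≥ J, coeff β (T j) = 0 :=
    fun β d J hβ hJ j hj =>
      coeff_of_lt_order ((Nat.cast_lt.mpr hβ).trans_le (hT d j (hJ.trans hj)))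
  let F : MvPowerSeries σ R := fun β =>
    coeff β (∑ j ∈ Finset.range (B (Finsupp.degree β + 1)), T j)
  have hF : ∀ β, coeff β F = coeff β (∑ j ∈ Finset.range (B (Finsupp.degree β + 1)), T j) :=
    fun _ => rfl
  refine ⟨F, fun d J hJ => le_order fun β hβ => ?_⟩
  have hβ : Finsupp.degree β < d := by exact_mod_cast hβ
  have h₁ := hvanish β _ _ (Nat.lt_succ_self _) le_rfl
  have h₂ := hvanish β d J hβ hJ
  rw [map_sub, sub_eq_zero, hF, map_sum, map_sum]
  rcases le_total J (B (Finsupp.degree β + 1)) with h | h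
  · exact Finset.eventually_constant_sum h₂ h
  · exact (Finset.eventually_constant_sum h₁ h).symm

end MvPowerSeries

namespace PowerSeries

section Semiring

variable {R : Type*} [Semiring R]

variable (R) in
noncomputable def initCoeffs (N : ℕ) : R⟦X⟧ →ₗ[R] Fin N → R :=
  LinearMap.pi fun j => coeff (j : ℕ)

@[simp]
theorem initCoeffs_apply (N : ℕ) (y : R⟦X⟧) (j : Fin N) : initCoeffs R N y j = coeff j y :=
  rfl

theorem initCoeffs_surjective (N : ℕ) : Function.Surjective (initCoeffs R N) := fun v =>
  ⟨mk fun k => if h : k < N then v ⟨k, h⟩ else 0, funext fun j => by simp⟩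

theorem mem_ker_initCoeffs {N : ℕ} {y : R⟦X⟧} :
    y ∈ LinearMap.ker (initCoeffs R N) ↔ ↑N ≤ y.order := by
  rw [LinearMap.mem_ker, natCast_le_order_iff_X_pow_dvd, X_pow_dvd_iff, funext_iff]
  exact ⟨fun h k hk => h ⟨k, hk⟩, fun h j => h j j.2⟩

theorem initCoeffs_map {S : Type*} [Semiring S] (φ : R →+* S) (N : ℕ) (y : R⟦X⟧) :
    initCoeffs S N (map φ y) = φ ∘ initCoeffs R N y :=
  funext fun j => coeff_map φ j y

/-- For the image of a parameterization this is the semigroup of values of the curve. -/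
def orderSet (V : Set R⟦X⟧) : Set ℕ :=
  {M | ∃ v ∈ V, v.order = M}

end Semiring

variable {K : Type*} [Field K]

theorem finrank_map_initCoeffs_le_card_orderSet (V : Submodule K K⟦X⟧)
    [DecidablePred (· ∈ orderSet (V : Set K⟦X⟧))] (N : ℕ) :
    Module.finrank K (V.map (initCoeffs K N)) ≤
      ((Finset.range N).filter (· ∈ orderSet (V : Set K⟦X⟧))).card := by
  set s := (Finset.range N).filter (· ∈ orderSet (V : Set K⟦X⟧))
  let restrict : V.map (initCoeffs K N) →ₗ[K] s → K := LinearMap.pi fun j =>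
    (LinearMap.proj ⟨j, Finset.mem_range.mp (Finset.mem_filter.mp j.2).1⟩) ∘ₗ Submodule.subtype _
  have hinj : Function.Injective restrict := by
    rw [← LinearMap.ker_eq_bot, LinearMap.ker_eq_bot']
    rintro ⟨_, v, hv, rfl⟩ hres
    -- a first nonzero coefficient of `v` would be the order of `v`, hence a position in `s`
    have hcoeff : ∀ k < N, coeff k v = 0 := by
      intro k
      induction k using Nat.strong_induction_on with
      | _ k ih =>
        intro hk
        by_contra hne
        have hks : k ∈ s := Finset.mem_filter.mpr ⟨Finset.mem_range.mpr hk,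
          v, hv, order_eq_nat.mpr ⟨hne, fun i hi => ih i hi (hi.trans hk)⟩⟩
        exact hne (congrFun hres ⟨k, hks⟩)
    exact Subtype.ext (funext fun j => hcoeff j j.2)
  calc Module.finrank K (V.map (initCoeffs K N)) ≤ Module.finrank K (s → K) :=
        LinearMap.finrank_le_finrank_of_injective hinj
    _ = s.card := by simp

theorem card_filter_notMem_orderSet_le (V : Submodule K K⟦X⟧)
    [DecidablePred (· ∈ orderSet (V : Set K⟦X⟧))] {δ : ℕ}
    (hV : ∀ N, N ≤ Module.finrank K (V.map (initCoeffs K N)) + δ) (N : ℕ) :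
    ((Finset.range N).filter (· ∉ orderSet (V : Set K⟦X⟧))).card ≤ δ := by
  have := finrank_map_initCoeffs_le_card_orderSet V N
  have := Finset.card_filter_add_card_filter_not (s := Finset.range N)
    (· ∈ orderSet (V : Set K⟦X⟧))
  have := hV N
  rw [Finset.card_range] at *
  omega

theorem exists_le_order_sub_sum_smul (z : ℕ → K⟦X⟧) (c : ℕ) (hz : ∀ j, (z j).order = ↑(c + j))
    {y : K⟦X⟧} (hy : ↑c ≤ y.order) :
    ∃ a : ℕ → K, ∀ J, ↑(c + J) ≤ (y - ∑ j ∈ Finset.range J, a j • z j).order := by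
  -- greedy expansion: `r J` is the remainder after `J` steps
  let r : ℕ → K⟦X⟧ := fun J => Nat.rec (motive := fun _ => K⟦X⟧) y
    (fun j r => r - (coeff (c + j) r / coeff (c + j) (z j)) • z j) J
  let a : ℕ → K := fun j => coeff (c + j) (r j) / coeff (c + j) (z j)
  have hr : ∀ J, r J = y - ∑ j ∈ Finset.range J, a j • z j := by
    intro J
    induction J with
    | zero => simp [r]
    | succ J ih => rw [Finset.sum_range_succ, ← sub_sub, ← ih]
  refine ⟨a, fun J => ?_⟩
  rw [← hr]
  induction J with
  | zero => simpa [r] using hy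
  | succ J ih =>
    have hzJ := order_eq_nat.mp (hz J)
    refine nat_le_order _ _ fun k hk => ?_
    change coeff k (r J - a J • z J) = 0
    rw [map_sub, map_smul, smul_eq_mul]
    rcases Nat.lt_or_ge k (c + J) with hk | hk
    · rw [coeff_of_lt_order k (lt_of_lt_of_le (by exact_mod_cast hk) ih), hzJ.2 k hk, mul_zero,
        sub_zero]
    · rw [show k = c + J by omega, div_mul_cancel₀ _ hzJ.1, sub_self]

end PowerSeries

namespace Submodule

section Ring

variable {R M N : Type*} [Ring R] [AddCommGroup M] [Module R M] [AddCommGroup N] [Module R N]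
  {f : M →ₗ[R] N}

theorem mapQ_map_surjective (hf : Function.Surjective f) (V : Submodule R M) :
    Function.Surjective (V.mapQ (V.map f) f (le_comap_map f V)) := by
  rw [← LinearMap.range_eq_top, range_mapQ, LinearMap.range_eq_top.mpr hf, Submodule.map_top,
    range_mkQ]

noncomputable def quotientEquivQuotientMap (hf : Function.Surjective f) {V : Submodule R M}
    (hV : LinearMap.ker f ≤ V) : (M ⧸ V) ≃ₗ[R] N ⧸ V.map f :=
  LinearEquiv.ofBijective (V.mapQ (V.map f) f (le_comap_map f V))
    ⟨by rw [← LinearMap.ker_eq_bot, ker_mapQ, comap_map_eq_self hV, mkQ_map_self],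
      mapQ_map_surjective hf V⟩

end Ring

section DivisionRing

variable {K M N : Type*} [DivisionRing K] [AddCommGroup M] [Module K M] [AddCommGroup N]
  [Module K N] [FiniteDimensional K N] {f : M →ₗ[K] N}

theorem finrank_le_finrank_map_add_finrank_quotient (hf : Function.Surjective f)
    (V : Submodule K M) [FiniteDimensional K (M ⧸ V)] :
    Module.finrank K N ≤ Module.finrank K (V.map f) + Module.finrank K (M ⧸ V) := by
  have h := LinearMap.finrank_range_le (V.mapQ (V.map f) f (le_comap_map f V))
  rw [LinearMap.range_eq_top.mpr (mapQ_map_surjective hf V), finrank_top] at h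
  have := (V.map f).finrank_quotient_add_finrank
  omega

theorem finiteDimensional_quotient_of_ker_le (hf : Function.Surjective f) {V : Submodule K M}
    (hV : LinearMap.ker f ≤ V) : FiniteDimensional K (M ⧸ V) :=
  (quotientEquivQuotientMap hf hV).symm.finiteDimensional

theorem finrank_quotient_add_finrank_map_of_ker_le (hf : Function.Surjective f)
    {V : Submodule K M} (hV : LinearMap.ker f ≤ V) :
    Module.finrank K (M ⧸ V) + Module.finrank K (V.map f) = Module.finrank K N := by
  rw [(quotientEquivQuotientMap hf hV).finrank_eq]
  exact (V.map f).finrank_quotient_add_finrank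

end DivisionRing

end Submodule

section IntegralLift

variable {ι κ : Type*} (p : ℕ) [Fact p.Prime]

theorem linearIndependent_int_of_zmod [Fintype ι] (w : ι → κ → ℤ)
    (h : LinearIndependent (ZMod p) fun i j => (w i j : ZMod p)) : LinearIndependent ℤ w := by
  rw [Fintype.linearIndependent_iff] at h ⊢
  intro m hm
  -- a relation mod `p` is trivial, so every coefficient of a relation is divisible by all `p ^ k`
  have hdvd : ∀ k i, (p : ℤ) ^ k ∣ m i := by
    intro k
    induction k with
    | zero => simp
    | succ k ih =>
      choose m' hm' using ih
      have hrel : ∑ i, m' i • w i = 0 := by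
        refine smul_right_injective (κ → ℤ) (pow_ne_zero k (Int.natCast_ne_zero.mpr
          (Fact.out : p.Prime).ne_zero)) ?_
        simpa only [smul_zero, Finset.smul_sum, smul_smul, ← hm'] using hm
      have hrelp := h (fun i => (m' i : ZMod p)) (funext fun j => by
        simpa using congrArg (Int.cast : ℤ → ZMod p) (congrFun hrel j))
      intro i
      rw [hm' i, pow_succ]
      exact mul_dvd_mul_left _ ((ZMod.intCast_zmod_eq_zero_iff_dvd _ p).mp (hrelp i))
  intro i
  refine Int.eq_zero_of_dvd_of_natAbs_lt_natAbs (hdvd (m i).natAbs i) ?_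
  rw [Int.natAbs_pow, Int.natAbs_natCast]
  exact Nat.lt_pow_self (Fact.out : p.Prime).one_lt

theorem linearIndependent_rat_of_zmod [Fintype ι] (w : ι → κ → ℤ)
    (h : LinearIndependent (ZMod p) fun i j => (w i j : ZMod p)) :
    LinearIndependent ℚ fun i j => (w i j : ℚ) := by
  rw [← LinearIndependent.iff_fractionRing ℤ ℚ]
  refine (linearIndependent_int_of_zmod p w h).map'
    ((Int.castAddHom ℚ).toIntLinearMap.compLeft κ) ?_
  rw [LinearMap.ker_eq_bot]
  exact fun u v huv => funext fun j => Int.cast_injective (congrFun huv j)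

theorem finrank_span_zmod_le_finrank_span_rat [Fintype κ] (w : ι → κ → ℤ) :
    Module.finrank (ZMod p) (Submodule.span (ZMod p) (Set.range fun i j => (w i j : ZMod p))) ≤
      Module.finrank ℚ (Submodule.span ℚ (Set.range fun i j => (w i j : ℚ))) := by
  obtain ⟨s, a, -, hspan, hli⟩ := exists_linearIndependent' (ZMod p) fun i j => (w i j : ZMod p)
  have : Fintype s := @Fintype.ofFinite _ hli.finite
  rw [← hspan, finrank_span_eq_card hli]
  have hliℚ := linearIndependent_rat_of_zmod p (w ∘ a) hli
  rw [← finrank_span_eq_card hliℚ]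
  exact Submodule.finrank_mono
    (Submodule.span_mono (Set.range_comp_subset_range a fun i j => (w i j : ℚ)))

end IntegralLift

namespace MvPowerSeries

variable {σ R : Type*}

theorem map_initCoeffs_range_eq [CommRing R] [Fintype σ] (ψ : MvPowerSeries σ R →ₐ[R] R⟦X⟧)
    (hψ : ∀ i, PowerSeries.constantCoeff (ψ (X i)) = 0) (N : ℕ) :
    (Subalgebra.toSubmodule ψ.range).map (initCoeffs R N) =
      (Subalgebra.toSubmodule (MvPolynomial.aeval fun i => ψ (X i)).range).map
        (initCoeffs R N) := by
  refine le_antisymm ?_ (Submodule.map_mono ?_)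
  · rintro _ ⟨_, ⟨F, rfl⟩, rfl⟩
    -- `ψ F` agrees with the image of the truncation of `F` below total degree `N`
    have hF : (N : ℕ∞) ≤ (F - ↑(truncTotal N F)).order :=
      le_order fun β hβ => by
        rw [map_sub, MvPolynomial.coeff_coe, coeff_truncTotal _ (by exact_mod_cast hβ), sub_self]
    have hψF := mem_ker_initCoeffs.mpr
      (hF.trans (le_order_map_of_constantCoeff_map_X ψ.toRingHom hψ _))
    rw [AlgHom.toRingHom_eq_coe, RingHom.coe_coe, map_sub, LinearMap.mem_ker, map_sub,
      sub_eq_zero, algHom_coe_eq_aeval] at hψF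
    exact ⟨_, ⟨_, rfl⟩, hψF.symm⟩
  · rintro _ ⟨P, rfl⟩
    exact algHom_coe_eq_aeval ψ P ▸ AlgHom.mem_range_self ψ _

end MvPowerSeries

theorem MvPolynomial.toSubmodule_range_aeval_eq_span {σ R A : Type*} [CommSemiring R]
    [CommSemiring A] [Algebra R A] (g : σ → A) :
    Subalgebra.toSubmodule (aeval g).range =
      Submodule.span R (Set.range fun α => aeval g (monomial α (1 : R))) := by
  refine le_antisymm ?_ (Submodule.span_le.mpr ?_)
  · rintro _ ⟨P, rfl⟩
    change aeval g P ∈ _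
    induction P using MvPolynomial.induction_on' with
    | monomial α a =>
      rw [show monomial α a = a • monomial α (1 : R) by simp [smul_monomial], map_smul]
      exact Submodule.smul_mem _ a (Submodule.subset_span (Set.mem_range_self α))
    | add P Q hP hQ =>
      rw [map_add]
      exact Submodule.add_mem _ hP hQ
  · rintro _ ⟨α, rfl⟩
    exact AlgHom.mem_range_self (aeval g) (monomial α 1)

theorem PowerSeries.map_initCoeffs_range_aeval_map_eq_span {σ R S : Type*} [CommRing R]
    [CommRing S] (φ : R →+* S) (f : σ → R⟦X⟧) (N : ℕ) :
    (Subalgebra.toSubmodule (MvPolynomial.aeval fun i => map φ (f i)).range).map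
        (initCoeffs S N) =
      Submodule.span S (Set.range fun α =>
        φ ∘ initCoeffs R N (MvPolynomial.aeval f (MvPolynomial.monomial α 1))) := by
  rw [MvPolynomial.toSubmodule_range_aeval_eq_span, Submodule.map_span, ← Set.range_comp]
  congr 2
  funext α
  rw [← initCoeffs_map]
  simp only [Function.comp_apply, MvPolynomial.aeval_monomial, map_finsuppProd, map_pow, map_one,
    one_mul]

theorem finrank_map_initCoeffs_range_zmod_le_rat {σ : Type*} [Fintype σ] (f : σ → ℤ⟦X⟧)
    (hf : ∀ i, constantCoeff (f i) = 0) (p : ℕ) [Fact p.Prime]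
    (ψp : MvPowerSeries σ (ZMod p) →ₐ[ZMod p] (ZMod p)⟦X⟧)
    (hψp : ∀ i, ψp (MvPowerSeries.X i) = map (Int.castRingHom (ZMod p)) (f i))
    (ψ0 : MvPowerSeries σ ℚ →ₐ[ℚ] ℚ⟦X⟧)
    (hψ0 : ∀ i, ψ0 (MvPowerSeries.X i) = map (Int.castRingHom ℚ) (f i)) (N : ℕ) :
    Module.finrank (ZMod p) ((Subalgebra.toSubmodule ψp.range).map (initCoeffs (ZMod p) N)) ≤
      Module.finrank ℚ ((Subalgebra.toSubmodule ψ0.range).map (initCoeffs ℚ N)) := by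
  rw [MvPowerSeries.map_initCoeffs_range_eq ψp fun i => by
      rw [hψp, constantCoeff_map, hf, map_zero],
    MvPowerSeries.map_initCoeffs_range_eq ψ0 fun i => by
      rw [hψ0, constantCoeff_map, hf, map_zero],
    show (fun i => ψp (MvPowerSeries.X i)) = _ from funext hψp,
    show (fun i => ψ0 (MvPowerSeries.X i)) = _ from funext hψ0,
    PowerSeries.map_initCoeffs_range_aeval_map_eq_span,
    PowerSeries.map_initCoeffs_range_aeval_map_eq_span]
  exact finrank_span_zmod_le_finrank_span_rat p fun α =>
    initCoeffs ℤ N (MvPolynomial.aeval f (MvPolynomial.monomial α 1))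

theorem Nat.exists_mul_add_mul_succ_eq {m M : ℕ} (hm : 1 ≤ m) (hM : m * m ≤ M) :
    ∃ a b, a * m + b * (m + 1) = M := by
  have hr : M % m < m := Nat.mod_lt M hm
  have hq : m ≤ M / m := (Nat.le_div_iff_mul_le hm).mpr hM
  obtain ⟨t, ht⟩ := Nat.exists_eq_add_of_le (hr.le.trans hq)
  refine ⟨t, M % m, ?_⟩
  have := Nat.div_add_mod M m
  rw [ht] at this
  linarith

namespace MvPowerSeries

variable {σ K : Type*} [Field K] [Fintype σ]

theorem mem_range_of_mul_self_le_order (ψ : MvPowerSeries σ K →ₐ[K] K⟦X⟧)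
    (hψ : ∀ i, PowerSeries.constantCoeff (ψ (X i)) = 0) {m : ℕ} (hm : 1 ≤ m)
    (hm₀ : m ∈ orderSet (ψ.range : Set K⟦X⟧)) (hm₁ : m + 1 ∈ orderSet (ψ.range : Set K⟦X⟧))
    {y : K⟦X⟧} (hy : ↑(m * m) ≤ y.order) : y ∈ ψ.range := by
  obtain ⟨_, hu, hU⟩ := hm₀
  obtain ⟨U, rfl⟩ := (AlgHom.mem_range _).mp hu
  obtain ⟨_, hv, hV⟩ := hm₁
  obtain ⟨V, rfl⟩ := (AlgHom.mem_range _).mp hv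
  have hpos : ∀ F, 1 ≤ (ψ F).order → 1 ≤ F.order := fun F h =>
    one_le_order_iff_constCoeff_eq_zero.mpr (constantCoeff_map_of_constantCoeff_map_X ψ hψ F ▸
      PowerSeries.one_le_order_iff_constCoeff_eq_zero.mp h)
  have hU₁ := hpos U (by rw [hU]; exact_mod_cast hm)
  have hV₁ := hpos V (by rw [hV]; exact_mod_cast Nat.le_add_left 1 m)
  -- `U ^ a * V ^ b` is sent to an element of order `a * m + b * (m + 1)`, while its own order
  -- `a + b` grows with it: this makes the greedy expansion of `y` converge upstairs
  choose a b hab using fun j => Nat.exists_mul_add_mul_succ_eq hm (Nat.le_add_right (m * m) j)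
  let Q : ℕ → MvPowerSeries σ K := fun j => U ^ a j * V ^ b j
  have hQ : ∀ j, ((a j + b j : ℕ) : ℕ∞) ≤ (Q j).order := fun j =>
    calc ((a j + b j : ℕ) : ℕ∞) = a j • 1 + b j • 1 := by simp
      _ ≤ a j • U.order + b j • V.order := add_le_add (nsmul_le_nsmul_right hU₁ _)
          (nsmul_le_nsmul_right hV₁ _)
      _ ≤ (Q j).order := (add_le_add (le_order_pow _) (le_order_pow _)).trans le_order_mul
  have hψQ : ∀ j, (ψ (Q j)).order = ↑(m * m + j) := fun j => by
    simp only [Q, map_mul, map_pow, PowerSeries.order_mul, PowerSeries.order_pow, hU, hV, ← hab j]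
    push_cast
    simp only [nsmul_eq_mul]
  obtain ⟨c, hc⟩ := PowerSeries.exists_le_order_sub_sum_smul (fun j => ψ (Q j)) (m * m) hψQ hy
  obtain ⟨F, hF⟩ := exists_le_order_sub_sum (fun j => c j • Q j) (fun d => (m + 1) * d)
    fun d j hj => by
      have hd : d ≤ a j + b j := by nlinarith [hab j]
      exact (Nat.cast_le.mpr hd).trans ((hQ j).trans le_order_smul)
  refine ⟨F, PowerSeries.ext fun k => ?_⟩
  set J := (m + 1) * (k + 1)
  have hSJ : ψ (∑ j ∈ Finset.range J, c j • Q j) = ∑ j ∈ Finset.range J, c j • ψ (Q j) := by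
    simp only [map_sum, map_smul]
  have h₁ := natCast_le_order_iff_X_pow_dvd.mp ((hF (k + 1) J le_rfl).trans
    (le_order_map_of_constantCoeff_map_X ψ.toRingHom hψ _))
  have h₂ := natCast_le_order_iff_X_pow_dvd.mp
    ((Nat.cast_le.mpr (le_add_left (Nat.le_mul_of_pos_left (k + 1) m.succ_pos))).trans (hc J))
  rw [AlgHom.toRingHom_eq_coe, RingHom.coe_coe, map_sub, hSJ] at h₁
  have hk : ↑(k + 1) ≤ (ψ F - y).order := natCast_le_order_iff_X_pow_dvd.mpr
    (by simpa using dvd_sub h₁ h₂)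
  simpa [sub_eq_zero] using PowerSeries.coeff_of_lt_order k
    (lt_of_lt_of_le (by exact_mod_cast k.lt_succ_self) hk)

end MvPowerSeries

theorem Set.exists_forall_ge_mem_of_card_filter_notMem_le {S : Set ℕ} [DecidablePred (· ∈ S)]
    {δ : ℕ} (h : ∀ N, ((Finset.range N).filter (· ∉ S)).card ≤ δ) : ∃ B, ∀ m, B ≤ m → m ∈ S := by
  have hfin : Sᶜ.Finite := by
    by_contra hinf
    obtain ⟨t, hts, htcard⟩ := Set.Infinite.exists_subset_card_eq hinf (δ + 1)
    have hsub : t ⊆ (Finset.range (t.sup id + 1)).filter (· ∉ S) := fun x hx =>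
      Finset.mem_filter.mpr
        ⟨Finset.mem_range.mpr (Nat.lt_succ_of_le (Finset.le_sup (f := id) hx)), hts hx⟩
    have := (Finset.card_le_card hsub).trans (h _)
    omega
  obtain ⟨B, hB⟩ := hfin.bddAbove
  exact ⟨B + 1, fun m hm => by_contra fun hmS => by have := hB hmS; omega⟩

theorem delta_semicontinuous_int_family_general {n : ℕ} (f : Fin n → PowerSeries ℤ)
    (hconst : ∀ i, constantCoeff (f i) = 0)
    (p : ℕ) [Fact p.Prime]
    (ψp : MvPowerSeries (Fin n) (ZMod p) →ₐ[ZMod p] PowerSeries (ZMod p))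
    (hψp : ∀ i, ψp (MvPowerSeries.X i) =
      PowerSeries.map (Int.castRingHom (ZMod p)) (f i))
    (ψ0 : MvPowerSeries (Fin n) ℚ →ₐ[ℚ] PowerSeries ℚ)
    (hψ0 : ∀ i, ψ0 (MvPowerSeries.X i) =
      PowerSeries.map (Int.castRingHom ℚ) (f i))
    (hfinp : FiniteDimensional (ZMod p)
      (PowerSeries (ZMod p) ⧸ Subalgebra.toSubmodule ψp.range)) :
    FiniteDimensional ℚ (PowerSeries ℚ ⧸ Subalgebra.toSubmodule ψ0.range) ∧
    Module.finrank ℚ (PowerSeries ℚ ⧸ Subalgebra.toSubmodule ψ0.range) ≤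
      Module.finrank (ZMod p)
        (PowerSeries (ZMod p) ⧸ Subalgebra.toSubmodule ψp.range) := by
  classical
  set δ := Module.finrank (ZMod p) (PowerSeries (ZMod p) ⧸ Subalgebra.toSubmodule ψp.range)
  have hcodim : ∀ N,
      N ≤ Module.finrank ℚ ((Subalgebra.toSubmodule ψ0.range).map (initCoeffs ℚ N)) + δ :=
    fun N => calc
      N = Module.finrank (ZMod p) (Fin N → ZMod p) := (Module.finrank_fin_fun _).symm
      _ ≤ Module.finrank (ZMod p) ((Subalgebra.toSubmodule ψp.range).map (initCoeffs _ N)) + δ :=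
        Submodule.finrank_le_finrank_map_add_finrank_quotient (initCoeffs_surjective N) _
      _ ≤ _ := Nat.add_le_add_right
        (finrank_map_initCoeffs_range_zmod_le_rat f hconst p ψp hψp ψ0 hψ0 N) δ
  obtain ⟨B, hB⟩ := Set.exists_forall_ge_mem_of_card_filter_notMem_le
    (card_filter_notMem_orderSet_le _ hcodim)
  have hψ0X : ∀ i, constantCoeff (ψ0 (MvPowerSeries.X i)) = 0 := fun i => by
    rw [hψ0, constantCoeff_map, hconst, map_zero]
  have hker : LinearMap.ker (initCoeffs ℚ ((B + 1) * (B + 1))) ≤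
      Subalgebra.toSubmodule ψ0.range := fun y hy =>
    MvPowerSeries.mem_range_of_mul_self_le_order ψ0 hψ0X B.succ_pos (hB _ (by omega))
      (hB _ (by omega)) (mem_ker_initCoeffs.mp hy)
  have hrank := Submodule.finrank_quotient_add_finrank_map_of_ker_le (initCoeffs_surjective _) hker
  rw [Module.finrank_fin_fun] at hrank
  have := hcodim ((B + 1) * (B + 1))
  exact ⟨Submodule.finiteDimensional_quotient_of_ker_le (initCoeffs_surjective _) hker, by omega⟩

/-- Let `φⁱ ∈ t·ℤ[[t]]`, `i = 1,...,n`, define a parameterization with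
integer coefficients; for a prime `p` let `φ_p` be its reduction mod `p` and `φ_0`
the induced parameterization over `ℚ`. If for some prime `p` the parameterization
`φ_p` is primitive with `δ_{𝔽_p}(R_p) = dim_{𝔽_p} 𝔽_p[[t]]/𝔽_p[[φ_p¹,...,φ_pⁿ]] < ∞`,
then `δ_ℚ(R_0) = dim_ℚ ℚ[[t]]/ℚ[[φ_0¹,...,φ_0ⁿ]] < ∞` and `δ_ℚ(R_0) ≤ δ_{𝔽_p}(R_p)`. -/
theorem delta_semicontinuous_int_family {n : ℕ} (f : Fin n → PowerSeries ℤ)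
    (hconst : ∀ i, constantCoeff (f i) = 0)
    (p : ℕ) [Fact p.Prime]
    (hne : ∃ i, PowerSeries.map (Int.castRingHom (ZMod p)) (f i) ≠ 0)
    (ψp : MvPowerSeries (Fin n) (ZMod p) →ₐ[ZMod p] PowerSeries (ZMod p))
    (hψploc : ∀ F, MvPowerSeries.constantCoeff F = 0 →
      constantCoeff (ψp F) = 0)
    (hψp : ∀ i, ψp (MvPowerSeries.X i) =
      PowerSeries.map (Int.castRingHom (ZMod p)) (f i))
    (ψ0 : MvPowerSeries (Fin n) ℚ →ₐ[ℚ] PowerSeries ℚ)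
    (hψ0loc : ∀ F, MvPowerSeries.constantCoeff F = 0 →
      constantCoeff (ψ0 F) = 0)
    (hψ0 : ∀ i, ψ0 (MvPowerSeries.X i) =
      PowerSeries.map (Int.castRingHom ℚ) (f i))
    (hfinp : FiniteDimensional (ZMod p)
      (PowerSeries (ZMod p) ⧸ Subalgebra.toSubmodule ψp.range)) :
    FiniteDimensional ℚ (PowerSeries ℚ ⧸ Subalgebra.toSubmodule ψ0.range) ∧
    Module.finrank ℚ (PowerSeries ℚ ⧸ Subalgebra.toSubmodule ψ0.range) ≤
      Module.finrank (ZMod p)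
        (PowerSeries (ZMod p) ⧸ Subalgebra.toSubmodule ψp.range) :=
  delta_semicontinuous_int_family_general f hconst p ψp hψp ψ0 hψ0 hfinp
end
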